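/- arXiv:2601.16722 — 7 statements merged into one kernel-verified Lean document; each statement's English description precedes it below -/
import Mathlib

section
/- Well-posedness of the coupled adoption–opinion model (Proposition 1): if s(0), a(0), d(0) ∈ [0,1]^n with s_j(0) + a_j(0) + d_j(0) = 1 for all j, and x(0) ∈ [0,1]^n, then for every t ∈ ℕ one has s(t), a(t), d(t) ∈ [0,1]^n, s_j(t) + a_j(t) + d_j(t) = 1 for all j, and x(t) ∈ [0,1]^n. -/
lemma avg_mem_Icc {n : ℕ} (w v : Fin n → ℝ) (hw0 : ∀ k, 0 ≤ w k) (hw1 : ∑ k, w k = 1)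
    (hv : ∀ k, v k ∈ Set.Icc (0:ℝ) 1) : (∑ k, w k * v k) ∈ Set.Icc (0:ℝ) 1 := by
  constructor
  · exact Finset.sum_nonneg fun k _ => mul_nonneg (hw0 k) (hv k).1
  · calc ∑ k, w k * v k ≤ ∑ k, w k :=
        Finset.sum_le_sum fun k _ => by nlinarith [(hv k).1, (hv k).2, hw0 k]
      _ = 1 := hw1

/-- Well-posedness of the coupled adoption–opinion model (Proposition 1). -/
theorem coupled_model_well_posedness
    (n : ℕ) (hn : 1 ≤ n)
    (β γ θ δ : Fin n → ℝ)
    (hβ : ∀ j, β j ∈ Set.Icc (0 : ℝ) 1) (hγ : ∀ j, γ j ∈ Set.Icc (0 : ℝ) 1)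
    (hθ : ∀ j, θ j ∈ Set.Icc (0 : ℝ) 1) (hδ : ∀ j, δ j ∈ Set.Icc (0 : ℝ) 1)
    (W Wt : Matrix (Fin n) (Fin n) ℝ)
    (hW0 : ∀ j k, 0 ≤ W j k) (hW1 : ∀ j, ∑ k, W j k = 1)
    (hWt0 : ∀ j k, 0 ≤ Wt j k) (hWt1 : ∀ j, ∑ k, Wt j k = 1)
    (lam ξ : Fin n → ℝ)
    (hlam : ∀ j, 0 ≤ lam j) (hξ : ∀ j, 0 ≤ ξ j)
    (hlamξ : ∀ j, lam j + ξ j ≤ 1)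
    (x0 : Fin n → ℝ) (hx0 : ∀ j, x0 j ∈ Set.Icc (0 : ℝ) 1)
    (s a d x : ℕ → Fin n → ℝ)
    (hs0 : ∀ j, s 0 j ∈ Set.Icc (0 : ℝ) 1) (ha0 : ∀ j, a 0 j ∈ Set.Icc (0 : ℝ) 1)
    (hd0 : ∀ j, d 0 j ∈ Set.Icc (0 : ℝ) 1)
    (hsum0 : ∀ j, s 0 j + a 0 j + d 0 j = 1)
    (hxinit : ∀ j, x 0 j ∈ Set.Icc (0 : ℝ) 1)
    (hrec_s : ∀ t j, s (t + 1) j = s t j - β j * x t j * s t j * (∑ k, W j k * a t k)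
        + γ j * x t j * d t j - θ j * (1 - x t j) * s t j)
    (hrec_a : ∀ t j, a (t + 1) j = a t j + β j * x t j * s t j * (∑ k, W j k * a t k)
        - δ j * a t j)
    (hrec_d : ∀ t j, d (t + 1) j = d t j - γ j * x t j * d t j
        + θ j * (1 - x t j) * s t j + δ j * a t j)
    (hrec_x : ∀ t j, x (t + 1) j = (1 - lam j - ξ j) * x0 j
        + lam j * (∑ k, Wt j k * x t k) + ξ j * (∑ k, W j k * a t k)) :
    ∀ t, (∀ j, s t j ∈ Set.Icc (0 : ℝ) 1) ∧ (∀ j, a t j ∈ Set.Icc (0 : ℝ) 1) ∧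
      (∀ j, d t j ∈ Set.Icc (0 : ℝ) 1) ∧ (∀ j, s t j + a t j + d t j = 1) ∧
      (∀ j, x t j ∈ Set.Icc (0 : ℝ) 1) := by
  intro t
  induction t with
  | zero => exact ⟨hs0, ha0, hd0, hsum0, hxinit⟩
  | succ t ih =>
    obtain ⟨hs, ha, hd, hsum, hx⟩ := ih
    have hA : ∀ j, (∑ k, W j k * a t k) ∈ Set.Icc (0:ℝ) 1 :=
      fun j => avg_mem_Icc _ _ (hW0 j) (hW1 j) ha
    -- nonnegativity of s,a,d at t+1
    have hs' : ∀ j, 0 ≤ s (t+1) j := by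
      intro j
      rw [hrec_s t j]
      obtain ⟨hA0, hA1⟩ := hA j
      have h1 : β j * x t j * (∑ k, W j k * a t k) ≤ x t j := by
        have hxA : x t j * (∑ k, W j k * a t k) ≤ x t j := by
          nlinarith [(hx j).1]
        nlinarith [mul_le_mul_of_nonneg_right (hβ j).2 (mul_nonneg (hx j).1 hA0)]
      have h2 : θ j * (1 - x t j) ≤ 1 - x t j := by
        nlinarith [(hθ j).1, (hθ j).2, (hx j).2]
      have h3 : 0 ≤ s t j * (1 - β j * x t j * (∑ k, W j k * a t k) - θ j * (1 - x t j)) :=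
        mul_nonneg (hs j).1 (by linarith)
      have h4 : 0 ≤ γ j * x t j * d t j :=
        mul_nonneg (mul_nonneg (hγ j).1 (hx j).1) (hd j).1
      nlinarith [h3, h4]
    have ha' : ∀ j, 0 ≤ a (t+1) j := by
      intro j
      rw [hrec_a t j]
      have h1 : 0 ≤ a t j * (1 - δ j) := mul_nonneg (ha j).1 (by linarith [(hδ j).2])
      have h2 : 0 ≤ β j * x t j * s t j * (∑ k, W j k * a t k) :=
        mul_nonneg (mul_nonneg (mul_nonneg (hβ j).1 (hx j).1) (hs j).1) (hA j).1
      nlinarith [h1, h2]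
    have hd' : ∀ j, 0 ≤ d (t+1) j := by
      intro j
      rw [hrec_d t j]
      have h1 : 0 ≤ d t j * (1 - γ j * x t j) := by
        apply mul_nonneg (hd j).1
        nlinarith [(hγ j).1, (hγ j).2, (hx j).1, (hx j).2]
      have h2 : 0 ≤ θ j * (1 - x t j) * s t j :=
        mul_nonneg (mul_nonneg (hθ j).1 (by linarith [(hx j).2])) (hs j).1
      have h3 : 0 ≤ δ j * a t j := mul_nonneg (hδ j).1 (ha j).1
      nlinarith [h1, h2, h3]
    have hsum' : ∀ j, s (t+1) j + a (t+1) j + d (t+1) j = 1 := by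
      intro j
      rw [hrec_s t j, hrec_a t j, hrec_d t j]
      linear_combination hsum j
    refine ⟨fun j => ⟨hs' j, ?_⟩, fun j => ⟨ha' j, ?_⟩, fun j => ⟨hd' j, ?_⟩, hsum', ?_⟩
    · linarith [hsum' j, ha' j, hd' j]
    · linarith [hsum' j, hs' j, hd' j]
    · linarith [hsum' j, hs' j, ha' j]
    · intro j
      rw [hrec_x t j]
      have hXt : (∑ k, Wt j k * x t k) ∈ Set.Icc (0:ℝ) 1 :=
        avg_mem_Icc _ _ (hWt0 j) (hWt1 j) hx
      obtain ⟨hA0, hA1⟩ := hA j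
      obtain ⟨hX0, hX1⟩ := hXt
      have hw : 0 ≤ 1 - lam j - ξ j := by linarith [hlamξ j]
      constructor
      · have := mul_nonneg hw (hx0 j).1
        have := mul_nonneg (hlam j) hX0
        have := mul_nonneg (hξ j) hA0
        linarith
      · have h1 : (1 - lam j - ξ j) * x0 j ≤ 1 - lam j - ξ j := by
          nlinarith [(hx0 j).2, (hx0 j).1]
        have h2 : lam j * (∑ k, Wt j k * x t k) ≤ lam j := by
          nlinarith [hlam j]
        have h3 : ξ j * (∑ k, W j k * a t k) ≤ ξ j := by
          nlinarith [hξ j]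
        linarith
end

section
/- Let W̃ ∈ ℝ^{n×n} be a nonnegative row-stochastic matrix (each row sums to 1) that is irreducible, i.e., for all i, j there exists m ≥ 1 with (W̃^m)_{ij} > 0. Let λ ∈ [0,1]^n and suppose λ_k < 1 for at least one index k. Then every complex eigenvalue of the matrix diag(λ)·W̃ has modulus strictly less than 1; in particular, the matrix I − diag(λ)·W̃ is invertible. -/
/-!
Suppose `diag(λ) W̃ v = μ v` with `v ≠ 0` and `|μ| ≥ 1`, and let `i` be an index where `|v i|` is
maximal. Row `i` of the eigen-equation expresses `μ v_i` as `λ_i` times a convex combination of the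
`v_j`, so `|μ v_i| ≥ |v_i|` forces `λ_i = 1` and `|v_j| = |v_i|` for every `j` with `W̃ i j > 0`.
The maximal indices are therefore closed under the edges of the graph of `W̃`; by irreducibility
they contain every index, in particular `k`, contradicting `λ_k < 1`. Since `1` is then not an
eigenvalue, `I - diag(λ) W̃` is invertible.
-/

open Matrix Finset

namespace Matrix

variable {n : Type*}

theorem IsIrreducible.mem_of_forall_pos_mem {R : Type*} [Ring R] [LinearOrder R]
    {A : Matrix n n R} (hA : A.IsIrreducible) {S : Set n}
    (hS : ∀ i ∈ S, ∀ j, 0 < A i j → j ∈ S) {i : n} (hi : i ∈ S) (j : n) : j ∈ S := by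
  let := toQuiver A
  obtain ⟨p, -⟩ := hA.connected i j
  induction p with
  | nil => exact hi
  | cons _ e ih => exact hS _ ih _ e.down

theorem exists_mulVec_eq_smul_of_isRoot_charpoly [Fintype n] [DecidableEq n] {K : Type*}
    [Field K] {B : Matrix n n K} {μ : K} (hμ : B.charpoly.IsRoot μ) :
    ∃ v ≠ 0, B *ᵥ v = μ • v := by
  rw [← charpoly_toLin', ← Module.End.hasEigenvalue_iff_isRoot_charpoly] at hμ
  obtain ⟨v, hv⟩ := hμ.exists_hasEigenvector
  exact ⟨v, hv.2, by simpa using hv.apply_eq_smul⟩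

end Matrix

theorem eq_one_and_eq_of_le_mul_sum {ι : Type*} [Fintype ι] {a c : ℝ} {w y : ι → ℝ}
    (hw0 : ∀ j, 0 ≤ w j) (hw1 : ∑ j, w j = 1) (ha : a ∈ Set.Icc (0 : ℝ) 1) (hc : 0 < c)
    (hy : ∀ j, y j ≤ c) (h : c ≤ a * ∑ j, w j * y j) :
    a = 1 ∧ ∀ j, 0 < w j → y j = c := by
  set s := ∑ j, w j * y j
  have hs : s ≤ c :=
    calc s ≤ ∑ j, w j * c := sum_le_sum fun j _ => mul_le_mul_of_nonneg_left (hy j) (hw0 j)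
      _ = c := by rw [← sum_mul, hw1, one_mul]
  have hs_pos : 0 < s := pos_of_mul_pos_right (hc.trans_le h) ha.1
  have hsc : s = c := le_antisymm hs (h.trans (mul_le_of_le_one_left hs_pos.le ha.2))
  refine ⟨by nlinarith [ha.2], fun j hj => ?_⟩
  have hgap : ∑ j, w j * (c - y j) = 0 := by
    simp only [mul_sub, sum_sub_distrib, ← sum_mul, hw1, one_mul, ← hsc, s, sub_self]
  have := (sum_eq_zero_iff_of_nonneg fun j _ =>
    mul_nonneg (hw0 j) (sub_nonneg.2 (hy j))).1 hgap j (mem_univ j)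
  linarith [(mul_eq_zero.1 this).resolve_left hj.ne']

theorem eq_one_and_norm_eq_of_sum_mul_eq {ι : Type*} [Fintype ι] {a : ℝ} {w : ι → ℝ}
    {v : ι → ℂ} {μ : ℂ} {i : ι} (hw0 : ∀ j, 0 ≤ w j) (hw1 : ∑ j, w j = 1)
    (ha : a ∈ Set.Icc (0 : ℝ) 1) (hμ : 1 ≤ ‖μ‖) (hi : v i ≠ 0) (hmax : ∀ j, ‖v j‖ ≤ ‖v i‖)
    (hrow : ∑ j, ((a * w j : ℝ) : ℂ) * v j = μ * v i) :
    a = 1 ∧ ∀ j, 0 < w j → ‖v j‖ = ‖v i‖ := by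
  refine eq_one_and_eq_of_le_mul_sum hw0 hw1 ha (norm_pos_iff.2 hi) hmax ?_
  calc ‖v i‖ ≤ ‖μ * v i‖ := by rw [norm_mul]; exact le_mul_of_one_le_left (norm_nonneg _) hμ
    _ ≤ ∑ j, ‖((a * w j : ℝ) : ℂ) * v j‖ := hrow ▸ norm_sum_le _ _
    _ = a * ∑ j, w j * ‖v j‖ := by
      rw [mul_sum]
      refine sum_congr rfl fun j _ => ?_
      rw [norm_mul, Complex.norm_real, Real.norm_of_nonneg (mul_nonneg ha.1 (hw0 j)), mul_assoc]

theorem norm_lt_one_of_isRoot_charpoly_diagonal_mul {ι : Type*} [Fintype ι] [DecidableEq ι]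
    {W : Matrix ι ι ℝ} (hW : W.IsIrreducible) (hW1 : ∀ i, ∑ j, W i j = 1) {lam : ι → ℝ}
    (hlam : ∀ i, lam i ∈ Set.Icc (0 : ℝ) 1) (hk : ∃ k, lam k < 1) {μ : ℂ}
    (hμ : ((diagonal lam * W).map (fun r : ℝ => (r : ℂ))).charpoly.IsRoot μ) : ‖μ‖ < 1 := by
  by_contra! hμ1
  obtain ⟨k, hk⟩ := hk
  obtain ⟨v, hv, hvμ⟩ := exists_mulVec_eq_smul_of_isRoot_charpoly hμ
  have : Nonempty ι := ⟨k⟩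
  obtain ⟨i₀, hi₀⟩ := Finite.exists_max fun i => ‖v i‖
  have hvi₀ : v i₀ ≠ 0 := fun h => hv <| funext fun j => by simpa [h] using hi₀ j
  have hrow : ∀ i, ∑ j, ((lam i * W i j : ℝ) : ℂ) * v j = μ * v i := fun i => by
    simpa [mulVec, dotProduct, diagonal_mul] using congrFun hvμ i
  have hmaximal : ∀ i, ‖v i‖ = ‖v i₀‖ → lam i = 1 ∧ ∀ j, 0 < W i j → ‖v j‖ = ‖v i₀‖ := by
    intro i hi
    rw [← hi]
    refine eq_one_and_norm_eq_of_sum_mul_eq (hW.nonneg i) (hW1 i) (hlam i) hμ1 ?_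
      (hi ▸ hi₀) (hrow i)
    rwa [← norm_ne_zero_iff, hi, norm_ne_zero_iff]
  have hk_max : ‖v k‖ = ‖v i₀‖ :=
    hW.mem_of_forall_pos_mem (S := {i | ‖v i‖ = ‖v i₀‖})
      (fun i hi => (hmaximal i hi).2) rfl k
  exact hk.ne (hmaximal k hk_max).1

theorem diag_mul_stochastic_spectrum_lt_one_general
    (n : ℕ)
    (Wt : Matrix (Fin n) (Fin n) ℝ)
    (hWt0 : ∀ i j, 0 ≤ Wt i j) (hWt1 : ∀ i, ∑ j, Wt i j = 1)
    (hirr : ∀ i j, ∃ m, 1 ≤ m ∧ 0 < (Wt ^ m) i j)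
    (lam : Fin n → ℝ) (hlam : ∀ j, lam j ∈ Set.Icc (0 : ℝ) 1)
    (hk : ∃ k, lam k < 1) :
    (∀ μ : ℂ,
        ((Matrix.diagonal lam * Wt).map (fun r : ℝ => (r : ℂ))).charpoly.IsRoot μ →
        ‖μ‖ < 1) ∧
    IsUnit (1 - Matrix.diagonal lam * Wt) := by
  have hW : Wt.IsIrreducible := (isIrreducible_iff_exists_pow_pos hWt0).2 hirr
  have hspec := fun μ => norm_lt_one_of_isRoot_charpoly_diagonal_mul (μ := μ) hW hWt1 hlam hk
  refine ⟨hspec, ?_⟩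
  by_contra hsing
  have h1 : (1 : ℝ) ∈ spectrum ℝ (diagonal lam * Wt) := by
    simpa [spectrum.mem_iff] using hsing
  have hroot := (mem_spectrum_iff_isRoot_charpoly.1 h1).map (f := Complex.ofRealHom)
  rw [← charpoly_map] at hroot
  simpa using hspec 1 hroot

/-- if `Wt` is row-stochastic and irreducible and `lam ∈ [0,1]^n` with
`lam k < 1` for some `k`, then every complex eigenvalue of `diag(lam) * Wt` has modulus
strictly less than 1, and `I - diag(lam) * Wt` is invertible. -/
theorem diag_mul_stochastic_spectrum_lt_one
    (n : ℕ) (hn : 1 ≤ n)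
    (Wt : Matrix (Fin n) (Fin n) ℝ)
    (hWt0 : ∀ i j, 0 ≤ Wt i j) (hWt1 : ∀ i, ∑ j, Wt i j = 1)
    (hirr : ∀ i j, ∃ m, 1 ≤ m ∧ 0 < (Wt ^ m) i j)
    (lam : Fin n → ℝ) (hlam : ∀ j, lam j ∈ Set.Icc (0 : ℝ) 1)
    (hk : ∃ k, lam k < 1) :
    (∀ μ : ℂ,
        ((Matrix.diagonal lam * Wt).map (fun r : ℝ => (r : ℂ))).charpoly.IsRoot μ →
        ‖μ‖ < 1) ∧
    IsUnit (1 - Matrix.diagonal lam * Wt) :=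
  diag_mul_stochastic_spectrum_lt_one_general n Wt hWt0 hWt1 hirr lam hlam hk
end

section
/- The adoption-free equilibrium opinion vector lies in the unit cube: if x⁰ ∈ [0,1]^n, λ, ξ ∈ ℝ^n are nonnegative with λ_j + ξ_j ≤ 1 for all j, W̃ is nonnegative row-stochastic, and I − ΛW̃ is invertible with every complex eigenvalue of ΛW̃ of modulus strictly less than 1, then the vector x* := (I − ΛW̃)^{−1}(I − Λ − Ξ) x⁰ satisfies 0 ≤ x*_j ≤ 1 for all j. -/
/-!
Write `M = I - ΛW̃`. Then `M x* = (I - Λ - Ξ) x⁰ ≥ 0` and `M (1 - x*) = (I - Λ) 1 - (I - Λ - Ξ) x⁰ ≥ 0`,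
so it suffices that `M y ≥ 0` forces `y ≥ 0` (a minimum principle). If `y` had a negative
minimum `m`, then at every row `i` where it is attained the chain `m ≥ λᵢ (W̃y)ᵢ ≥ λᵢ m ≥ m` is
tight: `λᵢ = 1` and row `i` of `W̃` is supported on the set `S = {y = m}`. Hence `M` is block
triangular with respect to `S`, and its `S × S` block has zero row sums, so `det M = 0`,
contradicting invertibility.
-/

open Matrix

section

variable {ι R : Type*} [Fintype ι] [DecidableEq ι]

theorem Matrix.det_eq_zero_of_invariant_mulVec_one_eq_zero [CommRing R] [IsDomain R]
    {M : Matrix ι ι R} (p : ι → Prop) [DecidablePred p] (hp : ∃ i, p i)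
    (hinvariant : ∀ i, p i → ∀ j, ¬p j → M i j = 0) (hsum : ∀ i, p i → (M *ᵥ 1) i = 0) :
    M.det = 0 := by
  have hblock : toSquareBlockProp M p *ᵥ 1 = 0 := by
    ext ⟨i, hi⟩
    have houtside : ∑ j : {j // ¬p j}, M i j = 0 :=
      Finset.sum_eq_zero fun j _ => hinvariant i hi j j.2
    have hrow : ∑ j, M i j = 0 := by simpa [mulVec, dotProduct] using hsum i hi
    rw [Pi.zero_apply, ← hrow, ← Fintype.sum_subtype_add_sum_subtype p, houtside, add_zero]
    simp [mulVec, dotProduct, toSquareBlockProp_def]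
  obtain ⟨i, hi⟩ := hp
  have hsingular : (toSquareBlockProp M p).det = 0 :=
    exists_mulVec_eq_zero_iff.mp ⟨1, fun h => one_ne_zero (congrFun h ⟨i, hi⟩), hblock⟩
  rw [twoBlockTriangular_det' M p hinvariant, hsingular, zero_mul]

variable {W : Matrix ι ι ℝ}

theorem Matrix.mulVec_apply_sub_eq_sum_of_mem_rowStochastic (hW : W ∈ rowStochastic ℝ ι)
    (y : ι → ℝ) (c : ℝ) (i : ι) : (W *ᵥ y) i - c = ∑ k, W i k * (y k - c) := by
  simp only [mul_sub, Finset.sum_sub_distrib, ← Finset.sum_mul,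
    sum_row_of_mem_rowStochastic hW i, one_mul, mulVec, dotProduct]

theorem Matrix.le_mulVec_apply_of_mem_rowStochastic (hW : W ∈ rowStochastic ℝ ι)
    {y : ι → ℝ} {c : ℝ} (hc : ∀ k, c ≤ y k) (i : ι) : c ≤ (W *ᵥ y) i := by
  rw [← sub_nonneg, mulVec_apply_sub_eq_sum_of_mem_rowStochastic hW]
  exact Finset.sum_nonneg fun k _ => mul_nonneg (hW.1 i k) (sub_nonneg.mpr (hc k))

theorem Matrix.eq_of_mulVec_apply_eq_of_mem_rowStochastic (hW : W ∈ rowStochastic ℝ ι)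
    {y : ι → ℝ} {c : ℝ} (hc : ∀ k, c ≤ y k) {i : ι} (heq : (W *ᵥ y) i = c) {k : ι}
    (hik : W i k ≠ 0) : y k = c := by
  have hzero : ∑ k, W i k * (y k - c) = 0 := by
    rw [← mulVec_apply_sub_eq_sum_of_mem_rowStochastic hW, heq, sub_self]
  have hterm := (Finset.sum_eq_zero_iff_of_nonneg fun k _ =>
    mul_nonneg (hW.1 i k) (sub_nonneg.mpr (hc k))).mp hzero k (Finset.mem_univ k)
  exact sub_eq_zero.mp ((mul_eq_zero.mp hterm).resolve_left hik)

variable {lam : ι → ℝ}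

theorem Matrix.one_sub_diagonal_mul_mulVec_apply (y : ι → ℝ) (i : ι) :
    ((1 - diagonal lam * W) *ᵥ y) i = y i - lam i * (W *ᵥ y) i := by
  rw [sub_mulVec, one_mulVec, ← mulVec_mulVec, Pi.sub_apply, mulVec_diagonal]

theorem Matrix.one_sub_diagonal_mul_apply_of_ne {i j : ι} (hij : i ≠ j) :
    (1 - diagonal lam * W) i j = -(lam i * W i j) := by
  rw [sub_apply, one_apply_ne hij, diagonal_mul, zero_sub]

theorem Matrix.eq_one_and_mulVec_apply_eq_of_neg_min (hW : W ∈ rowStochastic ℝ ι)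
    (hlam0 : 0 ≤ lam) (hlam1 : lam ≤ 1) {y : ι → ℝ} {m : ℝ} (hm : m < 0)
    (hmin : ∀ k, m ≤ y k) {i : ι} (hi : y i = m)
    (hy : 0 ≤ ((1 - diagonal lam * W) *ᵥ y) i) : lam i = 1 ∧ (W *ᵥ y) i = m := by
  rw [one_sub_diagonal_mul_mulVec_apply, hi] at hy
  have hWy := le_mulVec_apply_of_mem_rowStochastic hW hmin i
  have hlower : lam i * m ≤ lam i * (W *ᵥ y) i := mul_le_mul_of_nonneg_left hWy (hlam0 i)
  have hscaled : m ≤ lam i * m := by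
    have hlami : lam i ≤ 1 := hlam1 i
    nlinarith
  have hlam : lam i = 1 := by
    have : (lam i - 1) * m = 0 := by linarith
    exact sub_eq_zero.mp ((mul_eq_zero.mp this).resolve_right hm.ne)
  exact ⟨hlam, by rw [hlam] at hy; linarith⟩

theorem Matrix.nonneg_of_nonneg_one_sub_diagonal_mul_mulVec (hW : W ∈ rowStochastic ℝ ι)
    (hlam0 : 0 ≤ lam) (hlam1 : lam ≤ 1) (hunit : IsUnit (1 - diagonal lam * W))
    {y : ι → ℝ} (hy : 0 ≤ (1 - diagonal lam * W) *ᵥ y) : 0 ≤ y := by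
  classical
  by_contra hneg
  obtain ⟨i₁, hi₁⟩ : ∃ i, y i < 0 := by simpa [Pi.le_def] using hneg
  obtain ⟨i₀, -, hmin⟩ := Finset.exists_min_image Finset.univ y ⟨i₁, Finset.mem_univ i₁⟩
  have hmin : ∀ k, y i₀ ≤ y k := fun k => hmin k (Finset.mem_univ k)
  have hcritical i (hi : y i = y i₀) :=
    eq_one_and_mulVec_apply_eq_of_neg_min hW hlam0 hlam1 ((hmin i₁).trans_lt hi₁) hmin hi (hy i)
  have hdet : (1 - diagonal lam * W).det = 0 := by
    refine det_eq_zero_of_invariant_mulVec_one_eq_zero (fun i => y i = y i₀) ⟨i₀, rfl⟩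
      (fun i hi j hj => ?_) (fun i hi => ?_)
    · have hWij : W i j = 0 := by
        by_contra hij
        exact hj (eq_of_mulVec_apply_eq_of_mem_rowStochastic hW hmin (hcritical i hi).2 hij)
      rw [one_sub_diagonal_mul_apply_of_ne (by rintro rfl; exact hj hi), hWij, mul_zero, neg_zero]
    · rw [one_sub_diagonal_mul_mulVec_apply, one_vecMul_of_mem_rowStochastic hW,
        (hcritical i hi).1]
      simp
  exact not_isUnit_zero (hdet ▸ (isUnit_iff_isUnit_det _).mp hunit)

end

theorem adoption_free_opinion_in_unit_cube_general
    (n : ℕ)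
    (Wt : Matrix (Fin n) (Fin n) ℝ)
    (hWt0 : ∀ i j, 0 ≤ Wt i j) (hWt1 : ∀ i, ∑ j, Wt i j = 1)
    (lam ξ : Fin n → ℝ)
    (hlam : ∀ j, 0 ≤ lam j) (hξ : ∀ j, 0 ≤ ξ j)
    (hlamξ : ∀ j, lam j + ξ j ≤ 1)
    (x0 : Fin n → ℝ) (hx0 : ∀ j, x0 j ∈ Set.Icc (0 : ℝ) 1)
    (hinv : IsUnit (1 - Matrix.diagonal lam * Wt))
    (xstar : Fin n → ℝ)
    (hxstar : xstar =
        ((1 - Matrix.diagonal lam * Wt)⁻¹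
          * (1 - Matrix.diagonal lam - Matrix.diagonal ξ)) *ᵥ x0) :
    ∀ j, 0 ≤ xstar j ∧ xstar j ≤ 1 := by
  have hW : Wt ∈ rowStochastic ℝ (Fin n) := mem_rowStochastic_iff_sum.mpr ⟨hWt0, hWt1⟩
  have hlam1 : lam ≤ 1 := fun j => (le_add_of_nonneg_right (hξ j)).trans (hlamξ j)
  have hequilibrium j : ((1 - diagonal lam * Wt) *ᵥ xstar) j = (1 - lam j - ξ j) * x0 j := by
    rw [hxstar, mulVec_mulVec,
      mul_nonsing_inv_cancel_left (h := (isUnit_iff_isUnit_det _).mp hinv)]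
    simp [sub_mulVec, mulVec_diagonal, sub_mul]
  have hlower : 0 ≤ xstar :=
    nonneg_of_nonneg_one_sub_diagonal_mul_mulVec hW hlam hlam1 hinv fun j => by
      rw [Pi.zero_apply, hequilibrium]
      exact mul_nonneg (by linarith [hlamξ j, hξ j]) (hx0 j).1
  have hupper : 0 ≤ 1 - xstar :=
    nonneg_of_nonneg_one_sub_diagonal_mul_mulVec hW hlam hlam1 hinv fun j => by
      rw [mulVec_sub, Pi.sub_apply, hequilibrium, one_sub_diagonal_mul_mulVec_apply,
        one_vecMul_of_mem_rowStochastic hW, Pi.one_apply, Pi.zero_apply]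
      obtain ⟨hx0_nonneg, hx0_le_one⟩ := hx0 j
      have hlamj : lam j ≤ 1 := hlam1 j
      nlinarith [mul_nonneg (sub_nonneg.mpr hlamj) (sub_nonneg.mpr hx0_le_one),
        mul_nonneg (hξ j) hx0_nonneg]
  exact fun j => ⟨hlower j, sub_nonneg.mp (hupper j)⟩

/-- the adoption-free equilibrium opinion vector
`x* = (I − ΛW̃)⁻¹ (I − Λ − Ξ) x⁰` lies in the unit cube. -/
theorem adoption_free_opinion_in_unit_cube
    (n : ℕ) (hn : 1 ≤ n)
    (Wt : Matrix (Fin n) (Fin n) ℝ)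
    (hWt0 : ∀ i j, 0 ≤ Wt i j) (hWt1 : ∀ i, ∑ j, Wt i j = 1)
    (lam ξ : Fin n → ℝ)
    (hlam : ∀ j, 0 ≤ lam j) (hξ : ∀ j, 0 ≤ ξ j)
    (hlamξ : ∀ j, lam j + ξ j ≤ 1)
    (x0 : Fin n → ℝ) (hx0 : ∀ j, x0 j ∈ Set.Icc (0 : ℝ) 1)
    (hinv : IsUnit (1 - Matrix.diagonal lam * Wt))
    (heig : ∀ μ : ℂ,
        ((Matrix.diagonal lam * Wt).map (fun r : ℝ => (r : ℂ))).charpoly.IsRoot μ →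
        ‖μ‖ < 1)
    (xstar : Fin n → ℝ)
    (hxstar : xstar =
        ((1 - Matrix.diagonal lam * Wt)⁻¹
          * (1 - Matrix.diagonal lam - Matrix.diagonal ξ)) *ᵥ x0) :
    ∀ j, 0 ≤ xstar j ∧ xstar j ≤ 1 :=
  adoption_free_opinion_in_unit_cube_general n Wt hWt0 hWt1 lam ξ hlam hξ hlamξ x0 hx0 hinv xstar
    hxstar
end

section
/- Adoption-free equilibrium (Proposition 2): assume I − ΛW̃ is invertible, set x* := (I − ΛW̃)^{−1}(I − Λ − Ξ) x⁰, and assume γ_j x*_j + θ_j (1 − x*_j) > 0 for all j. Then the point (a, d, x) = (0, Ψ(x*), x*), where Ψ(x*)_j := θ_j (1 − x*_j) / (γ_j x*_j + θ_j (1 − x*_j)), is an equilibrium of the coupled adoption–opinion model: the admissible trajectory with a(0) = 0, d(0) = Ψ(x*), x(0) = x* satisfies a(t) = 0, d(t) = Ψ(x*), x(t) = x* for all t ∈ ℕ. -/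
open Matrix

/-!
At `a = 0` every adoption term vanishes, so `a` stays `0`, the opinion update reduces to the
affine map `x ↦ (I - Λ - Ξ) x⁰ + Λ W̃ x`, whose fixed point is exactly `x*`, and the
disengagement update at `x = x*` is the map `d ↦ d - γ x* d + θ (1 - x*) (1 - d)`, whose fixed
point is `Ψ(x*)`. Induction on `t` then keeps the trajectory at `(0, Ψ(x*), x*)`.
-/

theorem Matrix.mulVec_eq_of_eq_inv_mul_mulVec {ι R : Type*} [Fintype ι] [DecidableEq ι]
    [CommRing R] {A B : Matrix ι ι R} (hA : IsUnit A) {x y : ι → R}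
    (hx : x = (A⁻¹ * B) *ᵥ y) : A *ᵥ x = B *ᵥ y := by
  rw [hx, mulVec_mulVec, ← mul_assoc, mul_nonsing_inv _ ((isUnit_iff_isUnit_det A).mp hA),
    one_mul]

theorem Matrix.one_sub_diagonal_mul_mulVec_apply_s5 {ι R : Type*} [Fintype ι] [DecidableEq ι]
    [CommRing R] (c : ι → R) (M : Matrix ι ι R) (x : ι → R) (j : ι) :
    ((1 - diagonal c * M) *ᵥ x) j = x j - c j * ∑ k, M j k * x k := by
  rw [sub_mulVec, one_mulVec, ← mulVec_mulVec, Pi.sub_apply, mulVec_diagonal]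
  rfl

theorem Matrix.one_sub_diagonal_sub_diagonal_mulVec_apply {ι R : Type*} [Fintype ι]
    [DecidableEq ι] [CommRing R] (c e x : ι → R) (j : ι) :
    ((1 - diagonal c - diagonal e) *ᵥ x) j = (1 - c j - e j) * x j := by
  simp only [sub_mulVec, one_mulVec, Pi.sub_apply, mulVec_diagonal]
  ring

theorem disengagement_update_fixed {K : Type*} [Field K] {γ θ x Ψ : K}
    (h : γ * x + θ * (1 - x) ≠ 0) (hΨ : Ψ = θ * (1 - x) / (γ * x + θ * (1 - x))) :
    Ψ - γ * x * Ψ + θ * (1 - x) * (1 - Ψ) = Ψ := by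
  have hΨ' : Ψ * (γ * x + θ * (1 - x)) = θ * (1 - x) := by rw [hΨ]; exact div_mul_cancel₀ _ h
  linear_combination -hΨ'

theorem adoption_free_equilibrium_general
    (n : ℕ)
    (β γ θ δ : Fin n → ℝ)
    (W Wt : Matrix (Fin n) (Fin n) ℝ)
    (lam ξ : Fin n → ℝ)
    (x0 : Fin n → ℝ)
    (hinv : IsUnit (1 - Matrix.diagonal lam * Wt))
    (xstar : Fin n → ℝ)
    (hxstar : xstar =
        ((1 - Matrix.diagonal lam * Wt)⁻¹
          * (1 - Matrix.diagonal lam - Matrix.diagonal ξ)) *ᵥ x0)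
    (hpos : ∀ j, 0 < γ j * xstar j + θ j * (1 - xstar j))
    (Psi : Fin n → ℝ)
    (hPsi : ∀ j, Psi j = θ j * (1 - xstar j) / (γ j * xstar j + θ j * (1 - xstar j)))
    -- the admissible trajectory starting at (0, Ψ(x*), x*)
    (a d x : ℕ → Fin n → ℝ)
    (hrec_a : ∀ t j, a (t + 1) j = a t j
        + β j * x t j * (1 - a t j - d t j) * (∑ k, W j k * a t k) - δ j * a t j)
    (hrec_d : ∀ t j, d (t + 1) j = d t j - γ j * x t j * d t j
        + θ j * (1 - x t j) * (1 - a t j - d t j) + δ j * a t j)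
    (hrec_x : ∀ t j, x (t + 1) j = (1 - lam j - ξ j) * x0 j
        + lam j * (∑ k, Wt j k * x t k) + ξ j * (∑ k, W j k * a t k))
    (hinit_a : ∀ j, a 0 j = 0) (hinit_d : ∀ j, d 0 j = Psi j)
    (hinit_x : ∀ j, x 0 j = xstar j) :
    ∀ t, (∀ j, a t j = 0) ∧ (∀ j, d t j = Psi j) ∧ (∀ j, x t j = xstar j) := by
  have hx_fixed (j : Fin n) :
      (1 - lam j - ξ j) * x0 j + lam j * ∑ k, Wt j k * xstar k = xstar j := by
    have h := congrFun (mulVec_eq_of_eq_inv_mul_mulVec hinv hxstar) j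
    rw [one_sub_diagonal_mul_mulVec_apply_s5, one_sub_diagonal_sub_diagonal_mulVec_apply] at h
    linear_combination -h
  have hd_fixed (j : Fin n) :
      Psi j - γ j * xstar j * Psi j + θ j * (1 - xstar j) * (1 - Psi j) = Psi j :=
    disengagement_update_fixed (hpos j).ne' (hPsi j)
  intro t
  induction t with
  | zero => exact ⟨hinit_a, hinit_d, hinit_x⟩
  | succ t ih =>
    obtain ⟨ha, hd, hx⟩ := ih
    have hx' : x t = xstar := funext hx
    refine ⟨fun j => ?_, fun j => ?_, fun j => ?_⟩
    · simp [hrec_a, ha]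
    · rw [hrec_d, ha, hd, hx]
      linear_combination hd_fixed j
    · simp [hrec_x, ha, hx', hx_fixed]

/-- Adoption-free equilibrium (Proposition 2): the point
`(0, Ψ(x*), x*)` is an equilibrium of the coupled adoption–opinion model. -/
theorem adoption_free_equilibrium
    (n : ℕ) (hn : 1 ≤ n)
    (β γ θ δ : Fin n → ℝ)
    (hβ : ∀ j, β j ∈ Set.Icc (0 : ℝ) 1) (hγ : ∀ j, γ j ∈ Set.Icc (0 : ℝ) 1)
    (hθ : ∀ j, θ j ∈ Set.Icc (0 : ℝ) 1) (hδ : ∀ j, δ j ∈ Set.Icc (0 : ℝ) 1)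
    (W Wt : Matrix (Fin n) (Fin n) ℝ)
    (hW0 : ∀ j k, 0 ≤ W j k) (hW1 : ∀ j, ∑ k, W j k = 1)
    (hWt0 : ∀ j k, 0 ≤ Wt j k) (hWt1 : ∀ j, ∑ k, Wt j k = 1)
    (lam ξ : Fin n → ℝ)
    (hlam : ∀ j, 0 ≤ lam j) (hξ : ∀ j, 0 ≤ ξ j)
    (hlamξ : ∀ j, lam j + ξ j ≤ 1)
    (x0 : Fin n → ℝ) (hx0 : ∀ j, x0 j ∈ Set.Icc (0 : ℝ) 1)
    (hinv : IsUnit (1 - Matrix.diagonal lam * Wt))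
    (xstar : Fin n → ℝ)
    (hxstar : xstar =
        ((1 - Matrix.diagonal lam * Wt)⁻¹
          * (1 - Matrix.diagonal lam - Matrix.diagonal ξ)) *ᵥ x0)
    (hpos : ∀ j, 0 < γ j * xstar j + θ j * (1 - xstar j))
    (Psi : Fin n → ℝ)
    (hPsi : ∀ j, Psi j = θ j * (1 - xstar j) / (γ j * xstar j + θ j * (1 - xstar j)))
    -- the admissible trajectory starting at (0, Ψ(x*), x*)
    (a d x : ℕ → Fin n → ℝ)
    (ha0 : ∀ j, a 0 j ∈ Set.Icc (0 : ℝ) 1) (hd0 : ∀ j, d 0 j ∈ Set.Icc (0 : ℝ) 1)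
    (had0 : ∀ j, a 0 j + d 0 j ≤ 1) (hx00 : ∀ j, x 0 j ∈ Set.Icc (0 : ℝ) 1)
    (hrec_a : ∀ t j, a (t + 1) j = a t j
        + β j * x t j * (1 - a t j - d t j) * (∑ k, W j k * a t k) - δ j * a t j)
    (hrec_d : ∀ t j, d (t + 1) j = d t j - γ j * x t j * d t j
        + θ j * (1 - x t j) * (1 - a t j - d t j) + δ j * a t j)
    (hrec_x : ∀ t j, x (t + 1) j = (1 - lam j - ξ j) * x0 j
        + lam j * (∑ k, Wt j k * x t k) + ξ j * (∑ k, W j k * a t k))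
    (hinit_a : ∀ j, a 0 j = 0) (hinit_d : ∀ j, d 0 j = Psi j)
    (hinit_x : ∀ j, x 0 j = xstar j) :
    ∀ t, (∀ j, a t j = 0) ∧ (∀ j, d t j = Psi j) ∧ (∀ j, x t j = xstar j) :=
  adoption_free_equilibrium_general n β γ θ δ W Wt lam ξ x0 hinv xstar hxstar hpos Psi hPsi a d x
    hrec_a hrec_d hrec_x hinit_a hinit_d hinit_x
end

section
/- Global asymptotic stability of the adoption-free equilibrium (Theorem 1): assume additionally γ_j > 0, θ_j > 0 and γ_j + θ_j < 1 for all j, that W and W̃ are irreducible (for all i, j there exists m ≥ 1 with (W^m)_{ij} > 0, and likewise for W̃), and that λ_k + ξ_k < 1 for some k (so that I − ΛW̃ is invertible); set x* := (I − ΛW̃)^{−1}(I − Λ − Ξ) x⁰. Let x̄ ∈ [0,1]^n and suppose the admissible trajectory (a(t), d(t), x(t)) satisfies x_j(t) ≤ x̄_j for all j and all t ∈ ℕ. If every complex eigenvalue of the nonnegative matrix M̄ := I − Δ + B·diag(x̄)·(I − diag(Ψ(x̄)))·W, where Ψ(x̄)_j := θ_j (1 − x̄_j) / (γ_j x̄_j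 + θ_j (1 − x̄_j)), has modulus strictly less than 1, then a(t) → 0, d(t) → Ψ(x*), and x(t) → x* as t → ∞, where Ψ(x*)_j := θ_j (1 − x*_j) / (γ_j x*_j + θ_j (1 − x*_j)). -/
/-!
Since `x ≤ x̄` along the trajectory, the defector update is bounded below by its value at `x̄`: with
`c̄ⱼ = γⱼ x̄ⱼ + θⱼ (1 - x̄ⱼ) > 0` this gives `dⱼ(t) ≥ Ψ̄ⱼ (1 - aⱼ(t)) - (1 - c̄ⱼ)ᵗ`. Hence the
susceptible fraction is at most `(1 - Ψ̄ⱼ)(1 - aⱼ(t)) + (1 - c̄ⱼ)ᵗ`, and the adopters satisfy the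
linear comparison `a(t+1) ≤ M̄ a(t) + ((1 - c̄ⱼ)ᵗ)ⱼ`.

A nonnegative matrix `A` one of whose powers has all row sums `< 1` admits a weight `w ≥ 𝟙` with
`A w ≤ ρ w` for some `ρ < 1` (take `w = ∑_{k<M} Aᵏ 𝟙`); then every nonnegative sequence with
`v(t+1) ≤ A v(t) + ζ(t)` and `ζ → 0` tends to `0`. For `M̄` such a power exists by Gelfand's
formula, for `ΛW̃` by the irreducibility of `W̃` and `λₖ < 1` at one node. This gives `a → 0`, and
then `x → x*`, the fixed point of `x ↦ (I - Λ - Ξ) x⁰ + ΛW̃ x`. Finally each `dⱼ` satisfies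
`dⱼ(t+1) = (1 - cⱼ(t)) dⱼ(t) + gⱼ(t)` with `cⱼ(t) = γⱼ xⱼ(t) + θⱼ (1 - xⱼ(t)) ≥ min γⱼ θⱼ > 0`,
`cⱼ → γⱼ x*ⱼ + θⱼ (1 - x*ⱼ)` and `gⱼ → θⱼ (1 - x*ⱼ)`, so `dⱼ → Ψ(x*)ⱼ`.
-/

open Matrix Filter
open scoped Topology

theorem tendsto_zero_of_le_mul_add {u ζ : ℕ → ℝ} {ρ : ℝ} (hρ0 : 0 ≤ ρ) (hρ1 : ρ < 1)
    (hu : ∀ t, 0 ≤ u t) (hrec : ∀ t, u (t + 1) ≤ ρ * u t + ζ t)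
    (hζ : Tendsto ζ atTop (𝓝 0)) : Tendsto u atTop (𝓝 0) := by
  refine tendsto_order.2 ⟨fun b hb => .of_forall fun t => hb.trans_le (hu t), fun ε hε => ?_⟩
  -- beyond `N`, the input is below `(1 - ρ) ε / 2`, so `u - ε / 2` contracts by `ρ`
  obtain ⟨N, hN⟩ := eventually_atTop.1 <|
    hζ.eventually (ge_mem_nhds (show 0 < (1 - ρ) * (ε / 2) by nlinarith))
  have hgeom : ∀ m, u (N + m) - ε / 2 ≤ ρ ^ m * u N := by
    intro m
    induction m with
    | zero => simp; linarith
    | succ m ih =>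
      have := mul_le_mul_of_nonneg_left ih hρ0
      have := hrec (N + m)
      have := hN (N + m) (by omega)
      rw [pow_succ', mul_assoc, ← add_assoc]
      nlinarith
  obtain ⟨m₀, hm₀⟩ := eventually_atTop.1 <|
    ((tendsto_pow_atTop_nhds_zero_of_lt_one hρ0 hρ1).mul_const (u N)).eventually
      (gt_mem_nhds (show (0 : ℝ) * u N < ε / 2 by linarith))
  refine eventually_atTop.2 ⟨N + m₀, fun t ht => ?_⟩
  obtain ⟨m, rfl⟩ := Nat.exists_eq_add_of_le (le_of_add_le_left ht)
  linarith [hgeom m, hm₀ m (by omega)]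

theorem tendsto_div_of_eq_one_sub_mul_add {y c g : ℕ → ℝ} {c₀ c' g' : ℝ} (hc₀ : 0 < c₀)
    (hc : ∀ t, c t ∈ Set.Icc c₀ 1) (hct : Tendsto c atTop (𝓝 c'))
    (hgt : Tendsto g atTop (𝓝 g')) (hrec : ∀ t, y (t + 1) = (1 - c t) * y t + g t) :
    Tendsto y atTop (𝓝 (g' / c')) := by
  have hc' : c' ≠ 0 := (hc₀.trans_le (ge_of_tendsto' hct fun t => (hc t).1)).ne'
  set L := g' / c'
  have hf : Tendsto (fun t => g t - c t * L) atTop (𝓝 0) := by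
    simpa [L, mul_div_cancel₀ _ hc'] using hgt.sub (hct.mul_const L)
  have hdist : Tendsto (fun t => |y t - L|) atTop (𝓝 0) := by
    refine tendsto_zero_of_le_mul_add (ρ := 1 - c₀) (by linarith [(hc 0).1, (hc 0).2])
      (by linarith) (fun t => abs_nonneg _) (fun t => ?_) (by simpa using hf.abs)
    have hy : y (t + 1) - L = (1 - c t) * (y t - L) + (g t - c t * L) := by rw [hrec]; ring
    rw [hy]
    refine (abs_add_le _ _).trans (add_le_add ?_ le_rfl)
    rw [abs_mul, abs_of_nonneg (by linarith [(hc t).2])]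
    exact mul_le_mul_of_nonneg_right (by linarith [(hc t).1]) (abs_nonneg _)
  exact tendsto_iff_norm_sub_tendsto_zero.2 (by simpa using hdist)

theorem exists_norm_pow_lt_one_of_spectralRadius_lt_one {𝔸 : Type*} [NormedRing 𝔸]
    [NormedAlgebra ℂ 𝔸] [CompleteSpace 𝔸] {a : 𝔸} (h : spectralRadius ℂ a < 1) :
    ∃ M : ℕ, ‖a ^ M‖ < 1 := by
  obtain ⟨M, hM, hlt⟩ := ((eventually_ge_atTop 1).and
    ((spectrum.pow_nnnorm_pow_one_div_tendsto_nhds_spectralRadius a).eventually_lt_const h)).exists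
  refine ⟨M, ?_⟩
  by_contra! hge
  exact hlt.not_ge <| ENNReal.one_le_rpow (by exact_mod_cast hge) (by positivity)

namespace Matrix

variable {ι : Type*} [Fintype ι] {A : Matrix ι ι ℝ}

theorem mulVec_mono_of_nonneg (hA : ∀ i j, 0 ≤ A i j) {v w : ι → ℝ} (h : v ≤ w) :
    A *ᵥ v ≤ A *ᵥ w := fun i =>
  Finset.sum_le_sum fun j _ => mul_le_mul_of_nonneg_left (h j) (hA i j)

theorem mulVec_nonneg_of_nonneg (hA : ∀ i j, 0 ≤ A i j) {v : ι → ℝ} (hv : 0 ≤ v) :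
    0 ≤ A *ᵥ v := by
  simpa using mulVec_mono_of_nonneg hA hv

theorem abs_mulVec_le_of_nonneg (hA : ∀ i j, 0 ≤ A i j) (v : ι → ℝ) :
    |A *ᵥ v| ≤ A *ᵥ |v| := fun i =>
  (Finset.abs_sum_le_sum_abs _ _).trans_eq <| by simp only [abs_mul, abs_of_nonneg (hA i _)]; rfl

/-- For a nonnegative `A`, this says that `A` contracts the weighted sup norm
`‖v / w‖` with factor `ρ`. -/
def IsWeightedContraction (A : Matrix ι ι ℝ) : Prop :=
  ∃ w : ι → ℝ, 1 ≤ w ∧ ∃ ρ : ℝ, 0 ≤ ρ ∧ ρ < 1 ∧ A *ᵥ w ≤ ρ • w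

theorem IsWeightedContraction.tendsto_zero_of_le_mulVec_add (hA : ∀ i j, 0 ≤ A i j)
    (hc : A.IsWeightedContraction) {v ζ : ℕ → ι → ℝ} (hv : ∀ t, 0 ≤ v t)
    (hrec : ∀ t, v (t + 1) ≤ A *ᵥ v t + ζ t) (hζ : Tendsto ζ atTop (𝓝 0)) :
    Tendsto v atTop (𝓝 0) := by
  obtain ⟨w, hw1, ρ, hρ0, hρ1, hAw⟩ := hc
  have hw0 : ∀ i, 0 < w i := fun i => zero_lt_one.trans_le (hw1 i)
  set u : ℕ → ℝ := fun t => ‖v t / w‖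
  have hvu : ∀ t, v t ≤ u t • w := fun t i =>
    (div_le_iff₀ (hw0 i)).1 ((le_abs_self _).trans (norm_le_pi_norm (v t / w) i))
  have hζw : ∀ t, ζ t ≤ ‖ζ t‖ • w := fun t i =>
    ((le_abs_self _).trans (norm_le_pi_norm (ζ t) i)).trans
      (le_mul_of_one_le_right (norm_nonneg _) (hw1 i))
  have hurec : ∀ t, u (t + 1) ≤ ρ * u t + ‖ζ t‖ := by
    intro t
    have hstep : v (t + 1) ≤ (ρ * u t + ‖ζ t‖) • w := calc
      v (t + 1) ≤ A *ᵥ (u t • w) + ‖ζ t‖ • w :=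
        (hrec t).trans (add_le_add (mulVec_mono_of_nonneg hA (hvu t)) (hζw t))
      _ ≤ (ρ * u t) • w + ‖ζ t‖ • w := by
        rw [mulVec_smul, mul_comm, mul_smul]
        exact add_le_add (smul_le_smul_of_nonneg_left hAw (norm_nonneg _)) le_rfl
      _ = (ρ * u t + ‖ζ t‖) • w := (add_smul _ _ _).symm
    refine (pi_norm_le_iff_of_nonneg (by positivity)).2 fun i => ?_
    rw [Pi.div_apply, Real.norm_eq_abs, abs_of_nonneg (div_nonneg (hv _ i) (hw0 i).le),
      div_le_iff₀ (hw0 i)]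
    exact hstep i
  have hu : Tendsto u atTop (𝓝 0) := tendsto_zero_of_le_mul_add hρ0 hρ1 (fun t => norm_nonneg _)
    hurec (by simpa using hζ.norm)
  refine squeeze_zero_norm (fun t => (pi_norm_le_iff_of_nonneg (by positivity)).2 fun i => ?_)
    (by simpa using hu.mul_const ‖w‖ : Tendsto (fun t => u t * ‖w‖) atTop (𝓝 0))
  rw [Real.norm_eq_abs, abs_of_nonneg (hv t i)]
  exact (hvu t i).trans (mul_le_mul_of_nonneg_left
    ((le_abs_self _).trans (norm_le_pi_norm w i)) (norm_nonneg _))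

theorem IsWeightedContraction.tendsto_of_eq_add_mulVec_add (hA : ∀ i j, 0 ≤ A i j)
    (hc : A.IsWeightedContraction) {b xstar : ι → ℝ} (hfix : xstar = b + A *ᵥ xstar)
    {x e : ℕ → ι → ℝ} (hrec : ∀ t, x (t + 1) = b + A *ᵥ x t + e t)
    (he : Tendsto e atTop (𝓝 0)) : Tendsto x atTop (𝓝 xstar) := by
  have hdiff : ∀ t, x (t + 1) - xstar = A *ᵥ (x t - xstar) + e t := fun t => by
    rw [hrec, mulVec_sub]; nth_rw 1 [hfix]; abel
  have hv : Tendsto (fun t => |x t - xstar|) atTop (𝓝 0) :=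
    hc.tendsto_zero_of_le_mulVec_add hA (fun t => abs_nonneg _) (fun t => by
      rw [hdiff]
      exact (abs_add_le _ _).trans (add_le_add (abs_mulVec_le_of_nonneg hA _) le_rfl))
      (tendsto_pi_nhds.2 fun i => by simpa using (tendsto_pi_nhds.1 he i).abs)
  refine tendsto_pi_nhds.2 fun i => tendsto_iff_norm_sub_tendsto_zero.2 ?_
  simpa using tendsto_pi_nhds.1 hv i

variable [DecidableEq ι]

theorem nonneg_of_forall_mulVec_nonneg (h : ∀ v, 0 ≤ v → 0 ≤ A *ᵥ v) (i j : ι) :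
    0 ≤ A i j := by
  simpa [mulVec_single_one] using h _ (Pi.single_nonneg.2 zero_le_one) i

theorem mulVec_mem_Icc_of_mem_rowStochastic {W : Matrix ι ι ℝ}
    (hW : W ∈ rowStochastic ℝ ι) {v : ι → ℝ} (hv : v ∈ Set.Icc 0 1) : W *ᵥ v ∈ Set.Icc 0 1 :=
  ⟨mulVec_nonneg_of_nonneg hW.1 hv.1, (mulVec_mono_of_nonneg hW.1 hv.2).trans hW.2.le⟩

theorem IsWeightedContraction.det_one_sub_ne_zero (hA : ∀ i j, 0 ≤ A i j)
    (hc : A.IsWeightedContraction) : (1 - A).det ≠ 0 := by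
  intro h
  obtain ⟨v, hv, hAv⟩ := exists_mulVec_eq_zero_iff.2 h
  rw [sub_mulVec, one_mulVec, sub_eq_zero] at hAv
  -- the constant sequence `|v|` satisfies `|v| ≤ A |v|`, so it tends to `0`
  have : Tendsto (fun _ : ℕ => |v|) atTop (𝓝 0) :=
    hc.tendsto_zero_of_le_mulVec_add hA (fun _ => abs_nonneg v)
      (fun _ => by simpa [← hAv] using abs_mulVec_le_of_nonneg hA v) tendsto_const_nhds
  exact hv (funext fun i => abs_eq_zero.1 (congrFun (tendsto_const_nhds_iff.1 this) i))

theorem pow_nonneg_of_nonneg (hA : ∀ i j, 0 ≤ A i j) (m : ℕ) (i j : ι) : 0 ≤ (A ^ m) i j := by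
  induction m generalizing i j with
  | zero => rw [pow_zero, one_apply]; split_ifs <;> norm_num
  | succ m ih =>
    rw [pow_succ, mul_apply]
    exact Finset.sum_nonneg fun k _ => mul_nonneg (ih i k) (hA k j)

theorem isWeightedContraction_of_norm_pow_mulVec_one_lt (hA : ∀ i j, 0 ≤ A i j) {M : ℕ}
    (hM : ‖A ^ M *ᵥ 1‖ < 1) : A.IsWeightedContraction := by
  set w := ∑ k ∈ Finset.range M, A ^ k *ᵥ 1 with hw
  have hAw : A *ᵥ w + 1 = w + A ^ M *ᵥ 1 := by
    have h1 := Finset.sum_range_succ' (fun k => A ^ k *ᵥ (1 : ι → ℝ)) M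
    have h2 := Finset.sum_range_succ (fun k => A ^ k *ᵥ (1 : ι → ℝ)) M
    simp only [pow_zero, one_mulVec, pow_succ', ← mulVec_mulVec] at h1
    rw [mulVec_sum, ← h1.symm.trans h2]
  have hw1 : 1 ≤ w := by
    cases M with
    | zero => exact fun i => absurd hM (not_lt.2 (by simpa using norm_le_pi_norm (1 : ι → ℝ) i))
    | succ M =>
      rw [hw, Finset.sum_range_succ', pow_zero, one_mulVec]
      exact le_add_of_nonneg_left <| Finset.sum_nonneg fun k _ =>
        mulVec_nonneg_of_nonneg (pow_nonneg_of_nonneg hA _) zero_le_one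
  have hwle : ∀ i, w i ≤ 1 + ‖w‖ := fun i =>
    (le_abs_self _).trans <| (norm_le_pi_norm w i).trans (le_add_of_nonneg_left zero_le_one)
  -- `A w ≤ w - (1 - ‖Aᴹ 𝟙‖) 𝟙` and `𝟙 ≥ w / (1 + ‖w‖)`
  refine ⟨w, hw1, 1 - (1 - ‖A ^ M *ᵥ 1‖) / (1 + ‖w‖), ?_, ?_, fun i => ?_⟩
  · rw [sub_nonneg, div_le_one (by positivity)]
    linarith [norm_nonneg (A ^ M *ᵥ 1), norm_nonneg w]
  · have : 0 < 1 - ‖A ^ M *ᵥ 1‖ := by linarith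
    linarith [div_pos this (by positivity : (0 : ℝ) < 1 + ‖w‖)]
  · have hAwi := congrFun hAw i
    have hMi := (le_abs_self _).trans (norm_le_pi_norm (A ^ M *ᵥ 1) i)
    have := mul_le_mul_of_nonneg_left (div_le_one_of_le₀ (hwle i) (by positivity))
      (sub_nonneg.2 hM.le)
    simp only [Pi.add_apply, Pi.one_apply] at hAwi
    rw [Pi.smul_apply, smul_eq_mul, sub_mul, one_mul, div_mul_comm, mul_comm]
    linarith

theorem exists_norm_pow_mulVec_one_lt_of_charpoly (A : Matrix ι ι ℝ)
    (h : ∀ μ : ℂ, (A.map (fun r : ℝ => (r : ℂ))).charpoly.IsRoot μ → ‖μ‖ < 1) :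
    ∃ M : ℕ, ‖A ^ M *ᵥ 1‖ < 1 := by
  let : NormedRing (Matrix ι ι ℂ) := Matrix.linftyOpNormedRing
  let : NormedAlgebra ℂ (Matrix ι ι ℂ) := Matrix.linftyOpNormedAlgebra
  set B := A.map (fun r : ℝ => (r : ℂ))
  have hB : spectralRadius ℂ B < 1 := by
    rcases (spectrum ℂ B).eq_empty_or_nonempty with hempty | hne
    · simp [spectralRadius, hempty]
    · have := spectrum.spectralRadius_lt_of_forall_lt_of_nonempty hne (r := 1) fun μ hμ => by
        have := h μ (mem_spectrum_iff_isRoot_charpoly.1 hμ)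
        rwa [← NNReal.coe_lt_coe, coe_nnnorm]
      exact_mod_cast this
  obtain ⟨M, hM⟩ := exists_norm_pow_lt_one_of_spectralRadius_lt_one hB
  have hpow : B ^ M *ᵥ 1 = fun i => ((A ^ M *ᵥ 1) i : ℂ) := by
    have : B ^ M = (A ^ M).map (fun r : ℝ => (r : ℂ)) :=
      (map_pow (Complex.ofRealHom.mapMatrix : Matrix ι ι ℝ →+* _) A M).symm
    funext i
    rw [this, ← Complex.ofRealHom_eq_coe, RingHom.map_mulVec]
    simp only [Function.comp_def, Pi.one_apply, map_one]; rfl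
  refine ⟨M, lt_of_le_of_lt ((pi_norm_le_iff_of_nonneg (norm_nonneg _)).2 fun i => ?_) hM⟩
  calc ‖(A ^ M *ᵥ 1) i‖ = ‖(B ^ M *ᵥ 1) i‖ := by rw [hpow, Complex.norm_real]
    _ ≤ ‖B ^ M *ᵥ 1‖ := norm_le_pi_norm _ i
    _ ≤ ‖B ^ M‖ * ‖(1 : ι → ℂ)‖ := linfty_opNorm_mulVec _ _
    _ ≤ ‖B ^ M‖ := mul_le_of_le_one_right (norm_nonneg _) <|
        (pi_norm_le_iff_of_nonneg zero_le_one).2 fun _ => norm_one.le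

theorem eq_add_mulVec_of_eq_inv_mul_mulVec {R : Type*} [CommRing R] {T B : Matrix ι ι R}
    {x y : ι → R} (hT : IsUnit (1 - T).det) (hx : x = ((1 - T)⁻¹ * B) *ᵥ y) :
    x = B *ᵥ y + T *ᵥ x := by
  have h : (1 - T) *ᵥ x = B *ᵥ y := by
    rw [hx, mulVec_mulVec, ← Matrix.mul_assoc, mul_nonsing_inv _ hT, Matrix.one_mul]
  rw [← h, sub_mulVec, one_mulVec, sub_add_cancel]

section Substochastic

variable {W : Matrix ι ι ℝ} {c : ι → ℝ}

theorem diagonal_mul_pow_succ_mulVec (m : ℕ) (v : ι → ℝ) :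
    (diagonal c * W) ^ (m + 1) *ᵥ v = c * (W *ᵥ ((diagonal c * W) ^ m *ᵥ v)) := by
  funext i
  simp only [pow_succ', ← mulVec_mulVec, mulVec_diagonal, Pi.mul_apply]

theorem pow_diagonal_mul_mulVec_one_mem_Icc (hW : W ∈ rowStochastic ℝ ι) (hc0 : 0 ≤ c)
    (hc1 : c ≤ 1) (m : ℕ) : (diagonal c * W) ^ m *ᵥ 1 ∈ Set.Icc 0 1 := by
  induction m with
  | zero => simp
  | succ m ih =>
    have h := mulVec_mem_Icc_of_mem_rowStochastic hW ih
    rw [diagonal_mul_pow_succ_mulVec]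
    exact ⟨mul_nonneg hc0 h.1, fun i => mul_le_one₀ (hc1 i) (h.1 i) (h.2 i)⟩

theorem antitone_pow_diagonal_mul_mulVec_one (hW : W ∈ rowStochastic ℝ ι) (hc0 : 0 ≤ c)
    (hc1 : c ≤ 1) : Antitone fun m => (diagonal c * W) ^ m *ᵥ 1 := by
  refine antitone_nat_of_succ_le fun m => ?_
  induction m with
  | zero => simpa using (pow_diagonal_mul_mulVec_one_mem_Icc hW hc0 hc1 1).2
  | succ m ih =>
    calc (diagonal c * W) ^ (m + 1 + 1) *ᵥ 1
        = c * (W *ᵥ ((diagonal c * W) ^ (m + 1) *ᵥ 1)) := diagonal_mul_pow_succ_mulVec ..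
      _ ≤ c * (W *ᵥ ((diagonal c * W) ^ m *ᵥ 1)) := fun i =>
          mul_le_mul_of_nonneg_left (mulVec_mono_of_nonneg hW.1 ih i) (hc0 i)
      _ = (diagonal c * W) ^ (m + 1) *ᵥ 1 := (diagonal_mul_pow_succ_mulVec ..).symm

theorem pow_diagonal_mul_mulVec_one_lt_one (hW : W ∈ rowStochastic ℝ ι) (hc0 : 0 ≤ c)
    (hc1 : c ≤ 1) {k : ι} (hk : c k < 1) (m : ℕ) {i : ι} (hik : 0 < (W ^ m) i k) :
    ((diagonal c * W) ^ (m + 1) *ᵥ 1) i < 1 := by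
  have hp := pow_diagonal_mul_mulVec_one_mem_Icc hW hc0 hc1
  rw [diagonal_mul_pow_succ_mulVec, Pi.mul_apply]
  induction m generalizing i with
  | zero =>
    obtain rfl : i = k := by by_contra h; simp [one_apply_ne h] at hik
    simpa [hW.2] using hk
  | succ m ih =>
    rw [pow_succ', mul_apply] at hik
    obtain ⟨l, -, hl⟩ := Finset.exists_lt_of_sum_lt (f := fun _ => (0 : ℝ)) (by simpa using hik)
    obtain ⟨hil, hlk⟩ := (pos_and_pos_or_neg_and_neg_of_mul_pos hl).resolve_right
      fun h => (hW.1 i l).not_gt h.1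
    have hWp : (W *ᵥ ((diagonal c * W) ^ (m + 1) *ᵥ 1)) i < 1 := calc
      _ < ∑ j, W i j * 1 :=
        Finset.sum_lt_sum (fun j _ => mul_le_mul_of_nonneg_left ((hp _).2 j) (hW.1 i j))
          ⟨l, Finset.mem_univ _, mul_lt_mul_of_pos_left
            (by simpa [diagonal_mul_pow_succ_mulVec] using ih hlk) hil⟩
      _ = 1 := congrFun hW.2 i
    exact mul_lt_one_of_nonneg_of_lt_one_right (hc1 i)
      (mulVec_nonneg_of_nonneg hW.1 (hp _).1 i) hWp

theorem exists_norm_pow_diagonal_mul_mulVec_one_lt (hW : W ∈ rowStochastic ℝ ι) (hc0 : 0 ≤ c)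
    (hc1 : c ≤ 1) {k : ι} (hk : c k < 1) (hreach : ∀ i, ∃ m, 0 < (W ^ m) i k) :
    ∃ M : ℕ, ‖(diagonal c * W) ^ M *ᵥ 1‖ < 1 := by
  choose m hm using hreach
  refine ⟨Finset.univ.sup m + 1, (pi_norm_lt_iff one_pos).2 fun i => ?_⟩
  rw [Real.norm_eq_abs, abs_of_nonneg ((pow_diagonal_mul_mulVec_one_mem_Icc hW hc0 hc1 _).1 i)]
  exact (antitone_pow_diagonal_mul_mulVec_one hW hc0 hc1
    (Nat.succ_le_succ (Finset.le_sup (Finset.mem_univ i))) i).trans_lt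
    (pow_diagonal_mul_mulVec_one_lt_one hW hc0 hc1 hk _ (hm i))

end Substochastic

end Matrix

theorem mul_add_mul_one_sub_mem_Icc {γ θ x : ℝ} (hγ : γ ≤ 1) (hθ : θ ≤ 1)
    (hx : x ∈ Set.Icc (0 : ℝ) 1) : γ * x + θ * (1 - x) ∈ Set.Icc (min γ θ) 1 := by
  have hx' : 0 ≤ 1 - x := sub_nonneg.2 hx.2
  have hmin := Convex.min_le_combo γ θ hx.1 hx' (add_sub_cancel x 1)
  have hmax := Convex.combo_le_max γ θ hx.1 hx' (add_sub_cancel x 1)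
  simp only [smul_eq_mul, mul_comm x, mul_comm (1 - x)] at hmin hmax
  exact ⟨hmin, hmax.trans (max_le hγ hθ)⟩

theorem div_mul_add_mul_one_sub_mem_Icc {γ θ x : ℝ} (hγ : 0 ≤ γ) (hθ : 0 ≤ θ)
    (hx : x ∈ Set.Icc (0 : ℝ) 1) (hpos : 0 < γ * x + θ * (1 - x)) :
    θ * (1 - x) / (γ * x + θ * (1 - x)) ∈ Set.Icc (0 : ℝ) 1 := by
  have h := mul_nonneg hθ (sub_nonneg.2 hx.2)
  exact ⟨div_nonneg h hpos.le, (div_le_one hpos).2 (le_add_of_nonneg_left (mul_nonneg hγ hx.1))⟩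

theorem adoption_step_bounds {β γ θ δ a d x s : ℝ} (hβ : β ∈ Set.Icc (0 : ℝ) 1)
    (hγ : γ ∈ Set.Icc (0 : ℝ) 1) (hθ : θ ∈ Set.Icc (0 : ℝ) 1) (hδ : δ ∈ Set.Icc (0 : ℝ) 1)
    (ha : 0 ≤ a) (hd : 0 ≤ d) (had : a + d ≤ 1) (hx : x ∈ Set.Icc (0 : ℝ) 1)
    (hs : s ∈ Set.Icc (0 : ℝ) 1) :
    0 ≤ a + β * x * (1 - a - d) * s - δ * a ∧
      0 ≤ d - γ * x * d + θ * (1 - x) * (1 - a - d) + δ * a ∧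
      (a + β * x * (1 - a - d) * s - δ * a) +
        (d - γ * x * d + θ * (1 - x) * (1 - a - d) + δ * a) ≤ 1 := by
  obtain ⟨hβ0, hβ1⟩ := hβ; obtain ⟨hγ0, hγ1⟩ := hγ; obtain ⟨hθ0, hθ1⟩ := hθ
  obtain ⟨hδ0, hδ1⟩ := hδ; obtain ⟨hx0, hx1⟩ := hx; obtain ⟨hs0, hs1⟩ := hs
  have hσ : 0 ≤ 1 - a - d := by linarith
  have hβxs : β * x * s ≤ x := by
    calc β * x * s ≤ 1 * x * 1 := by gcongr
      _ = x := by ring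
  have hγx : γ * x ≤ 1 := mul_le_one₀ hγ1 hx0 hx1
  have hθx : θ * (1 - x) ≤ 1 - x := mul_le_of_le_one_left (by linarith) hθ1
  refine ⟨?_, ?_, ?_⟩
  · nlinarith [mul_nonneg (mul_nonneg (mul_nonneg hβ0 hx0) hσ) hs0]
  · nlinarith [mul_nonneg (mul_nonneg hθ0 (sub_nonneg.2 hx1)) hσ, mul_nonneg hδ0 ha]
  · nlinarith [mul_le_mul_of_nonneg_left (add_le_add hβxs hθx) hσ,
      mul_nonneg (mul_nonneg hγ0 hx0) hd]

theorem opinion_step_mem {l ξ x₀ y s : ℝ} (hl : 0 ≤ l) (hξ : 0 ≤ ξ) (hlξ : l + ξ ≤ 1)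
    (hx₀ : x₀ ∈ Set.Icc (0 : ℝ) 1) (hy : y ∈ Set.Icc (0 : ℝ) 1) (hs : s ∈ Set.Icc (0 : ℝ) 1) :
    (1 - l - ξ) * x₀ + l * y + ξ * s ∈ Set.Icc (0 : ℝ) 1 := by
  obtain ⟨hx0, hx1⟩ := hx₀; obtain ⟨hy0, hy1⟩ := hy; obtain ⟨hs0, hs1⟩ := hs
  have h : 0 ≤ 1 - l - ξ := by linarith
  constructor <;> nlinarith [mul_nonneg h hx0, mul_nonneg hl hy0, mul_nonneg hξ hs0,
    mul_le_mul_of_nonneg_left hx1 h, mul_le_mul_of_nonneg_left hy1 hl,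
    mul_le_mul_of_nonneg_left hs1 hξ]

theorem defector_gap_step {β γ θ δ a d x s xbar psi : ℝ} (hβ : 0 ≤ β) (hγ : 0 ≤ γ) (hθ : 0 ≤ θ)
    (hδ : 0 ≤ δ) (ha : 0 ≤ a) (hd : 0 ≤ d) (had : a + d ≤ 1) (hx : 0 ≤ x) (hs : 0 ≤ s)
    (hxbar : x ≤ xbar) (hpsi0 : 0 ≤ psi) (hpsi1 : psi ≤ 1)
    (hpsi : psi * (γ * xbar + θ * (1 - xbar)) = θ * (1 - xbar)) :
    psi * (1 - (a + β * x * (1 - a - d) * s - δ * a)) -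
        (d - γ * x * d + θ * (1 - x) * (1 - a - d) + δ * a) ≤
      (1 - (γ * xbar + θ * (1 - xbar))) * (psi * (1 - a) - d) := by
  have hσ : 0 ≤ 1 - a - d := by linarith
  have hxx : 0 ≤ xbar - x := by linarith
  nlinarith [mul_nonneg (mul_nonneg hγ hd) hxx, mul_nonneg (mul_nonneg hθ hσ) hxx,
    mul_nonneg hpsi0 (mul_nonneg (mul_nonneg (mul_nonneg hβ hx) hσ) hs),
    mul_nonneg (mul_nonneg hδ ha) (sub_nonneg.2 hpsi1)]

theorem defector_gap_le {β γ θ δ xbar psi : ℝ} {a d x s : ℕ → ℝ} (hβ : 0 ≤ β) (hγ : 0 ≤ γ)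
    (hθ : 0 ≤ θ) (hδ : 0 ≤ δ) (ha : ∀ t, 0 ≤ a t) (hd : ∀ t, 0 ≤ d t)
    (had : ∀ t, a t + d t ≤ 1) (hx : ∀ t, 0 ≤ x t) (hs : ∀ t, 0 ≤ s t)
    (hxbar : ∀ t, x t ≤ xbar) (hpsi : psi ∈ Set.Icc (0 : ℝ) 1)
    (hpsi_mul : psi * (γ * xbar + θ * (1 - xbar)) = θ * (1 - xbar))
    (hc : γ * xbar + θ * (1 - xbar) ≤ 1)
    (hrec_a : ∀ t, a (t + 1) = a t + β * x t * (1 - a t - d t) * s t - δ * a t)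
    (hrec_d : ∀ t, d (t + 1) = d t - γ * x t * d t + θ * (1 - x t) * (1 - a t - d t) + δ * a t)
    (t : ℕ) : psi * (1 - a t) - d t ≤ (1 - (γ * xbar + θ * (1 - xbar))) ^ t := by
  induction t with
  | zero => nlinarith [mul_nonneg hpsi.1 (ha 0), hpsi.2, hd 0]
  | succ t ih =>
    rw [hrec_a, hrec_d, pow_succ']
    exact (defector_gap_step hβ hγ hθ hδ (ha t) (hd t) (had t) (hx t) (hs t) (hxbar t) hpsi.1
      hpsi.2 hpsi_mul).trans (mul_le_mul_of_nonneg_left ih (sub_nonneg.2 hc))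

theorem adoption_step_le {β δ a d x s xbar psi e : ℝ} (hβ : β ∈ Set.Icc (0 : ℝ) 1) (ha : 0 ≤ a)
    (had : a + d ≤ 1) (hx : 0 ≤ x) (hxbar : x ≤ xbar) (hxbar1 : xbar ≤ 1)
    (hs : s ∈ Set.Icc (0 : ℝ) 1) (hpsi1 : psi ≤ 1) (he : 0 ≤ e) (hgap : psi * (1 - a) - d ≤ e) :
    a + β * x * (1 - a - d) * s - δ * a ≤ (1 - δ) * a + β * xbar * (1 - psi) * s + e := by
  obtain ⟨hβ0, hβ1⟩ := hβ; obtain ⟨hs0, hs1⟩ := hs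
  have hσ : 0 ≤ 1 - a - d := by linarith
  have hβs : 0 ≤ β * s := mul_nonneg hβ0 hs0
  have hβxs : β * xbar * s ≤ 1 := by
    calc β * xbar * s ≤ 1 * 1 * 1 := by gcongr; linarith
      _ = 1 := by ring
  have hσle : 1 - a - d ≤ (1 - psi) + e := by nlinarith
  nlinarith [mul_le_mul_of_nonneg_left hxbar (mul_nonneg hβs hσ),
    mul_le_mul_of_nonneg_left hσle (mul_nonneg hβs (hx.trans hxbar)),
    mul_le_mul_of_nonneg_right hβxs he]

theorem defectors_tendsto {γ θ δ xstar : ℝ} {a d x : ℕ → ℝ} (hγ : γ ∈ Set.Icc (0 : ℝ) 1)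
    (hθ : θ ∈ Set.Icc (0 : ℝ) 1) (hγpos : 0 < γ) (hθpos : 0 < θ)
    (hx : ∀ t, x t ∈ Set.Icc (0 : ℝ) 1)
    (hrec_d : ∀ t, d (t + 1) = d t - γ * x t * d t + θ * (1 - x t) * (1 - a t - d t) + δ * a t)
    (ha : Tendsto a atTop (𝓝 0)) (hxt : Tendsto x atTop (𝓝 xstar)) :
    Tendsto d atTop (𝓝 (θ * (1 - xstar) / (γ * xstar + θ * (1 - xstar)))) := by
  have h := tendsto_div_of_eq_one_sub_mul_add (y := d)
    (g := fun t => θ * (1 - x t) * (1 - a t) + δ * a t) (lt_min hγpos hθpos)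
    (fun t => mul_add_mul_one_sub_mem_Icc hγ.2 hθ.2 (hx t))
    ((tendsto_const_nhds.mul hxt).add (tendsto_const_nhds.mul (tendsto_const_nhds.sub hxt)))
    (((tendsto_const_nhds.mul (tendsto_const_nhds.sub hxt)).mul
      (tendsto_const_nhds.sub ha)).add (tendsto_const_nhds.mul ha))
    (fun t => by rw [hrec_d]; ring)
  simpa using h

section Model

variable {ι : Type*} [Fintype ι] [DecidableEq ι]

theorem trajectory_bounds {β γ θ δ lam ξ x0 : ι → ℝ} {W Wt : Matrix ι ι ℝ}
    {a d x : ℕ → ι → ℝ} (hβ : ∀ j, β j ∈ Set.Icc (0 : ℝ) 1)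
    (hγ : ∀ j, γ j ∈ Set.Icc (0 : ℝ) 1) (hθ : ∀ j, θ j ∈ Set.Icc (0 : ℝ) 1)
    (hδ : ∀ j, δ j ∈ Set.Icc (0 : ℝ) 1) (hW : W ∈ rowStochastic ℝ ι)
    (hWt : Wt ∈ rowStochastic ℝ ι) (hlam : ∀ j, 0 ≤ lam j) (hξ : ∀ j, 0 ≤ ξ j)
    (hlamξ : ∀ j, lam j + ξ j ≤ 1) (hx0 : ∀ j, x0 j ∈ Set.Icc (0 : ℝ) 1)
    (ha0 : 0 ≤ a 0) (hd0 : 0 ≤ d 0) (had0 : a 0 + d 0 ≤ 1) (hx00 : x 0 ∈ Set.Icc 0 1)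
    (hrec_a : ∀ t j, a (t + 1) j = a t j
        + β j * x t j * (1 - a t j - d t j) * (W *ᵥ a t) j - δ j * a t j)
    (hrec_d : ∀ t j, d (t + 1) j = d t j - γ j * x t j * d t j
        + θ j * (1 - x t j) * (1 - a t j - d t j) + δ j * a t j)
    (hrec_x : ∀ t j, x (t + 1) j = (1 - lam j - ξ j) * x0 j
        + lam j * (Wt *ᵥ x t) j + ξ j * (W *ᵥ a t) j) (t : ℕ) :
    (0 ≤ a t ∧ 0 ≤ d t ∧ a t + d t ≤ 1) ∧ x t ∈ Set.Icc 0 1 := by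
  induction t with
  | zero => exact ⟨⟨ha0, hd0, had0⟩, hx00⟩
  | succ t ih =>
    obtain ⟨⟨ha, hd, had⟩, hx⟩ := ih
    have hWa := mulVec_mem_Icc_of_mem_rowStochastic hW ⟨ha, (le_add_of_nonneg_right hd).trans had⟩
    have hWx := mulVec_mem_Icc_of_mem_rowStochastic hWt hx
    have hstep j := adoption_step_bounds (hβ j) (hγ j) (hθ j) (hδ j) (ha j) (hd j) (had j)
      ⟨hx.1 j, hx.2 j⟩ ⟨hWa.1 j, hWa.2 j⟩
    have hx' j : x (t + 1) j ∈ Set.Icc (0 : ℝ) 1 := hrec_x t j ▸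
      opinion_step_mem (hlam j) (hξ j) (hlamξ j) (hx0 j) ⟨hWx.1 j, hWx.2 j⟩ ⟨hWa.1 j, hWa.2 j⟩
    refine ⟨⟨fun j => ?_, fun j => ?_, fun j => ?_⟩, fun j => (hx' j).1, fun j => (hx' j).2⟩
    · rw [hrec_a]; exact (hstep j).1
    · rw [hrec_d]; exact (hstep j).2.1
    · rw [Pi.add_apply, hrec_a, hrec_d]; exact (hstep j).2.2

theorem one_sub_diagonal_add_diagonal_mul_mulVec (β δ xbar psi v : ι → ℝ) (W : Matrix ι ι ℝ) :
    (1 - diagonal δ + diagonal β * diagonal xbar * (1 - diagonal psi) * W) *ᵥ v =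
      (1 - δ) * v + β * xbar * (1 - psi) * (W *ᵥ v) := by
  funext i
  simp only [add_mulVec, sub_mulVec, one_mulVec, ← mulVec_mulVec, mulVec_diagonal, Pi.add_apply,
    Pi.sub_apply, Pi.mul_apply, Pi.one_apply]
  ring

theorem adopters_tendsto_zero {β γ θ δ xbar Psibar : ι → ℝ} {W Mbar : Matrix ι ι ℝ}
    {a d x : ℕ → ι → ℝ} (hβ : ∀ j, β j ∈ Set.Icc (0 : ℝ) 1)
    (hγ : ∀ j, γ j ∈ Set.Icc (0 : ℝ) 1) (hθ : ∀ j, θ j ∈ Set.Icc (0 : ℝ) 1)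
    (hδ : ∀ j, δ j ∈ Set.Icc (0 : ℝ) 1) (hγpos : ∀ j, 0 < γ j) (hθpos : ∀ j, 0 < θ j)
    (hW : W ∈ rowStochastic ℝ ι) (hxbar : ∀ j, xbar j ∈ Set.Icc (0 : ℝ) 1)
    (hPsibar : ∀ j, Psibar j =
        θ j * (1 - xbar j) / (γ j * xbar j + θ j * (1 - xbar j)))
    (hMbar : Mbar = 1 - diagonal δ + diagonal β * diagonal xbar * (1 - diagonal Psibar) * W)
    (heig : ∀ μ : ℂ, (Mbar.map (fun r : ℝ => (r : ℂ))).charpoly.IsRoot μ → ‖μ‖ < 1)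
    (hbounds : ∀ t, (0 ≤ a t ∧ 0 ≤ d t ∧ a t + d t ≤ 1) ∧ x t ∈ Set.Icc 0 1)
    (hrec_a : ∀ t j, a (t + 1) j = a t j
        + β j * x t j * (1 - a t j - d t j) * (W *ᵥ a t) j - δ j * a t j)
    (hrec_d : ∀ t j, d (t + 1) j = d t j - γ j * x t j * d t j
        + θ j * (1 - x t j) * (1 - a t j - d t j) + δ j * a t j)
    (hbound : ∀ t j, x t j ≤ xbar j) :
    Tendsto a atTop (𝓝 0) := by
  have ha t := (hbounds t).1.1
  have hd t := (hbounds t).1.2.1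
  have had t := (hbounds t).1.2.2
  have hx t := (hbounds t).2.1
  set cbar : ι → ℝ := fun j => γ j * xbar j + θ j * (1 - xbar j)
  have hcbar j : cbar j ∈ Set.Icc (min (γ j) (θ j)) 1 :=
    mul_add_mul_one_sub_mem_Icc (hγ j).2 (hθ j).2 (hxbar j)
  have hcbar0 j : 0 < cbar j := (lt_min (hγpos j) (hθpos j)).trans_le (hcbar j).1
  have hpsi j : Psibar j ∈ Set.Icc (0 : ℝ) 1 :=
    hPsibar j ▸ div_mul_add_mul_one_sub_mem_Icc (hγ j).1 (hθ j).1 (hxbar j) (hcbar0 j)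
  have hWa t : W *ᵥ a t ∈ Set.Icc 0 1 :=
    mulVec_mem_Icc_of_mem_rowStochastic hW ⟨ha t, (le_add_of_nonneg_right (hd t)).trans (had t)⟩
  have hgap t j : Psibar j * (1 - a t j) - d t j ≤ (1 - cbar j) ^ t :=
    defector_gap_le (hβ j).1 (hγ j).1 (hθ j).1 (hδ j).1 (ha · j) (hd · j) (had · j) (hx · j)
      (fun t => (hWa t).1 j) (hbound · j) (hpsi j)
      (by rw [hPsibar j]; exact div_mul_cancel₀ _ (hcbar0 j).ne') (hcbar j).2
      (hrec_a · j) (hrec_d · j) t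
  have hM0 : ∀ i j, 0 ≤ Mbar i j := nonneg_of_forall_mulVec_nonneg fun v hv => by
    have hcoef : 0 ≤ β * xbar * (1 - Psibar) := fun k =>
      mul_nonneg (mul_nonneg (hβ k).1 (hxbar k).1) (sub_nonneg.2 (hpsi k).2)
    rw [hMbar, one_sub_diagonal_add_diagonal_mul_mulVec]
    exact add_nonneg (mul_nonneg (fun k => sub_nonneg.2 (hδ k).2) hv)
      (mul_nonneg hcoef (mulVec_nonneg_of_nonneg hW.1 hv))
  have hstep t : a (t + 1) ≤ Mbar *ᵥ a t + fun j => (1 - cbar j) ^ t := fun j => by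
    rw [hMbar, one_sub_diagonal_add_diagonal_mul_mulVec, hrec_a]
    exact adoption_step_le (hβ j) (ha t j) (had t j) (hx t j) (hbound t j) (hxbar j).2 ⟨(hWa t).1 j, (hWa t).2 j⟩ (hpsi j).2
      (pow_nonneg (sub_nonneg.2 (hcbar j).2) t) (hgap t j)
  obtain ⟨M, hM⟩ := exists_norm_pow_mulVec_one_lt_of_charpoly Mbar heig
  exact (isWeightedContraction_of_norm_pow_mulVec_one_lt hM0 hM).tendsto_zero_of_le_mulVec_add hM0
    ha hstep <| tendsto_pi_nhds.2 fun j =>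
      tendsto_pow_atTop_nhds_zero_of_lt_one (sub_nonneg.2 (hcbar j).2) (by linarith [hcbar0 j])

theorem opinions_tendsto {lam ξ x0 xstar : ι → ℝ} {W Wt : Matrix ι ι ℝ} {a x : ℕ → ι → ℝ}
    (hlam : ∀ j, 0 ≤ lam j) (hξ : ∀ j, 0 ≤ ξ j) (hlamξ : ∀ j, lam j + ξ j ≤ 1)
    (hWt : Wt ∈ rowStochastic ℝ ι) (hWtirr : ∀ i j, ∃ m, 0 < (Wt ^ m) i j)
    (hstub : ∃ k, lam k + ξ k < 1)
    (hxstar : xstar =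
        ((1 - diagonal lam * Wt)⁻¹ * (1 - diagonal lam - diagonal ξ)) *ᵥ x0)
    (hrec_x : ∀ t j, x (t + 1) j = (1 - lam j - ξ j) * x0 j
        + lam j * (Wt *ᵥ x t) j + ξ j * (W *ᵥ a t) j)
    (ha : Tendsto a atTop (𝓝 0)) : Tendsto x atTop (𝓝 xstar) := by
  obtain ⟨k, hk⟩ := hstub
  have hT i j : 0 ≤ (diagonal lam * Wt) i j := by
    rw [diagonal_mul]; exact mul_nonneg (hlam i) (hWt.1 i j)
  obtain ⟨M, hM⟩ := exists_norm_pow_diagonal_mul_mulVec_one_lt hWt hlam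
    (fun j => show lam j ≤ 1 by linarith [hlamξ j, hξ j]) (by linarith [hξ k]) (hWtirr · k)
  have hc := isWeightedContraction_of_norm_pow_mulVec_one_lt hT hM
  refine hc.tendsto_of_eq_add_mulVec_add hT (eq_add_mulVec_of_eq_inv_mul_mulVec
    (isUnit_iff_ne_zero.2 (hc.det_one_sub_ne_zero hT)) hxstar)
    (e := fun t => diagonal ξ *ᵥ W *ᵥ a t) (fun t => ?_) ?_
  · funext j
    simp only [hrec_x, sub_mulVec, one_mulVec, ← mulVec_mulVec, mulVec_diagonal, Pi.add_apply,
      Pi.sub_apply]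
    ring
  · simpa [Function.comp_def] using ((continuous_const.matrix_mulVec
      (continuous_const.matrix_mulVec continuous_id)).tendsto 0).comp ha

end Model

theorem adoption_free_equilibrium_GAS_general
    (n : ℕ)
    (β γ θ δ : Fin n → ℝ)
    (hβ : ∀ j, β j ∈ Set.Icc (0 : ℝ) 1) (hγ : ∀ j, γ j ∈ Set.Icc (0 : ℝ) 1)
    (hθ : ∀ j, θ j ∈ Set.Icc (0 : ℝ) 1) (hδ : ∀ j, δ j ∈ Set.Icc (0 : ℝ) 1)
    (hγpos : ∀ j, 0 < γ j) (hθpos : ∀ j, 0 < θ j)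
    (W Wt : Matrix (Fin n) (Fin n) ℝ)
    (hW0 : ∀ j k, 0 ≤ W j k) (hW1 : ∀ j, ∑ k, W j k = 1)
    (hWt0 : ∀ j k, 0 ≤ Wt j k) (hWt1 : ∀ j, ∑ k, Wt j k = 1)
    (hWtirr : ∀ i j, ∃ m, 1 ≤ m ∧ 0 < (Wt ^ m) i j)
    (lam ξ : Fin n → ℝ)
    (hlam : ∀ j, 0 ≤ lam j) (hξ : ∀ j, 0 ≤ ξ j)
    (hlamξ : ∀ j, lam j + ξ j ≤ 1)
    (hstub : ∃ k, lam k + ξ k < 1)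
    (x0 : Fin n → ℝ) (hx0 : ∀ j, x0 j ∈ Set.Icc (0 : ℝ) 1)
    (xstar : Fin n → ℝ)
    (hxstar : xstar =
        ((1 - Matrix.diagonal lam * Wt)⁻¹
          * (1 - Matrix.diagonal lam - Matrix.diagonal ξ)) *ᵥ x0)
    (Psistar : Fin n → ℝ)
    (hPsistar : ∀ j, Psistar j =
        θ j * (1 - xstar j) / (γ j * xstar j + θ j * (1 - xstar j)))
    (xbar : Fin n → ℝ) (hxbar : ∀ j, xbar j ∈ Set.Icc (0 : ℝ) 1)
    (Psibar : Fin n → ℝ)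
    (hPsibar : ∀ j, Psibar j =
        θ j * (1 - xbar j) / (γ j * xbar j + θ j * (1 - xbar j)))
    (Mbar : Matrix (Fin n) (Fin n) ℝ)
    (hMbar : Mbar = 1 - Matrix.diagonal δ
        + Matrix.diagonal β * Matrix.diagonal xbar
          * (1 - Matrix.diagonal Psibar) * W)
    (heig : ∀ μ : ℂ, (Mbar.map (fun r : ℝ => (r : ℂ))).charpoly.IsRoot μ →
        ‖μ‖ < 1)
    -- an admissible trajectory whose opinions stay below `xbar`
    (a d x : ℕ → Fin n → ℝ)
    (ha0 : ∀ j, a 0 j ∈ Set.Icc (0 : ℝ) 1) (hd0 : ∀ j, d 0 j ∈ Set.Icc (0 : ℝ) 1)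
    (had0 : ∀ j, a 0 j + d 0 j ≤ 1) (hx00 : ∀ j, x 0 j ∈ Set.Icc (0 : ℝ) 1)
    (hrec_a : ∀ t j, a (t + 1) j = a t j
        + β j * x t j * (1 - a t j - d t j) * (∑ k, W j k * a t k) - δ j * a t j)
    (hrec_d : ∀ t j, d (t + 1) j = d t j - γ j * x t j * d t j
        + θ j * (1 - x t j) * (1 - a t j - d t j) + δ j * a t j)
    (hrec_x : ∀ t j, x (t + 1) j = (1 - lam j - ξ j) * x0 j
        + lam j * (∑ k, Wt j k * x t k) + ξ j * (∑ k, W j k * a t k))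
    (hbound : ∀ t j, x t j ≤ xbar j) :
    Tendsto a atTop (nhds 0) ∧ Tendsto d atTop (nhds Psistar) ∧
      Tendsto x atTop (nhds xstar) := by
  have hW := mem_rowStochastic_iff_sum.2 ⟨hW0, hW1⟩
  have hWt := mem_rowStochastic_iff_sum.2 ⟨hWt0, hWt1⟩
  have hbounds := trajectory_bounds hβ hγ hθ hδ hW hWt hlam hξ hlamξ hx0 (fun j => (ha0 j).1)
    (fun j => (hd0 j).1) had0 ⟨fun j => (hx00 j).1, fun j => (hx00 j).2⟩ hrec_a hrec_d hrec_x
  have ha := adopters_tendsto_zero hβ hγ hθ hδ hγpos hθpos hW hxbar hPsibar hMbar heig hbounds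
    hrec_a hrec_d hbound
  have hx := opinions_tendsto hlam hξ hlamξ hWt (fun i j => (hWtirr i j).imp fun _ => And.right)
    hstub hxstar hrec_x ha
  refine ⟨ha, tendsto_pi_nhds.2 fun j => ?_, hx⟩
  rw [hPsistar j]
  exact defectors_tendsto (hγ j) (hθ j) (hγpos j) (hθpos j)
    (fun t => ⟨(hbounds t).2.1 j, (hbounds t).2.2 j⟩) (hrec_d · j) (tendsto_pi_nhds.1 ha j)
    (tendsto_pi_nhds.1 hx j)

/-- Global asymptotic stability of the adoption-free equilibrium
(Theorem 1). -/
theorem adoption_free_equilibrium_GAS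
    (n : ℕ) (hn : 1 ≤ n)
    (β γ θ δ : Fin n → ℝ)
    (hβ : ∀ j, β j ∈ Set.Icc (0 : ℝ) 1) (hγ : ∀ j, γ j ∈ Set.Icc (0 : ℝ) 1)
    (hθ : ∀ j, θ j ∈ Set.Icc (0 : ℝ) 1) (hδ : ∀ j, δ j ∈ Set.Icc (0 : ℝ) 1)
    (hγpos : ∀ j, 0 < γ j) (hθpos : ∀ j, 0 < θ j) (hγθ : ∀ j, γ j + θ j < 1)
    (W Wt : Matrix (Fin n) (Fin n) ℝ)
    (hW0 : ∀ j k, 0 ≤ W j k) (hW1 : ∀ j, ∑ k, W j k = 1)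
    (hWt0 : ∀ j k, 0 ≤ Wt j k) (hWt1 : ∀ j, ∑ k, Wt j k = 1)
    (hWirr : ∀ i j, ∃ m, 1 ≤ m ∧ 0 < (W ^ m) i j)
    (hWtirr : ∀ i j, ∃ m, 1 ≤ m ∧ 0 < (Wt ^ m) i j)
    (lam ξ : Fin n → ℝ)
    (hlam : ∀ j, 0 ≤ lam j) (hξ : ∀ j, 0 ≤ ξ j)
    (hlamξ : ∀ j, lam j + ξ j ≤ 1)
    (hstub : ∃ k, lam k + ξ k < 1)
    (x0 : Fin n → ℝ) (hx0 : ∀ j, x0 j ∈ Set.Icc (0 : ℝ) 1)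
    (xstar : Fin n → ℝ)
    (hxstar : xstar =
        ((1 - Matrix.diagonal lam * Wt)⁻¹
          * (1 - Matrix.diagonal lam - Matrix.diagonal ξ)) *ᵥ x0)
    (Psistar : Fin n → ℝ)
    (hPsistar : ∀ j, Psistar j =
        θ j * (1 - xstar j) / (γ j * xstar j + θ j * (1 - xstar j)))
    (xbar : Fin n → ℝ) (hxbar : ∀ j, xbar j ∈ Set.Icc (0 : ℝ) 1)
    (Psibar : Fin n → ℝ)
    (hPsibar : ∀ j, Psibar j =
        θ j * (1 - xbar j) / (γ j * xbar j + θ j * (1 - xbar j)))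
    (Mbar : Matrix (Fin n) (Fin n) ℝ)
    (hMbar : Mbar = 1 - Matrix.diagonal δ
        + Matrix.diagonal β * Matrix.diagonal xbar
          * (1 - Matrix.diagonal Psibar) * W)
    (heig : ∀ μ : ℂ, (Mbar.map (fun r : ℝ => (r : ℂ))).charpoly.IsRoot μ →
        ‖μ‖ < 1)
    -- an admissible trajectory whose opinions stay below `xbar`
    (a d x : ℕ → Fin n → ℝ)
    (ha0 : ∀ j, a 0 j ∈ Set.Icc (0 : ℝ) 1) (hd0 : ∀ j, d 0 j ∈ Set.Icc (0 : ℝ) 1)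
    (had0 : ∀ j, a 0 j + d 0 j ≤ 1) (hx00 : ∀ j, x 0 j ∈ Set.Icc (0 : ℝ) 1)
    (hrec_a : ∀ t j, a (t + 1) j = a t j
        + β j * x t j * (1 - a t j - d t j) * (∑ k, W j k * a t k) - δ j * a t j)
    (hrec_d : ∀ t j, d (t + 1) j = d t j - γ j * x t j * d t j
        + θ j * (1 - x t j) * (1 - a t j - d t j) + δ j * a t j)
    (hrec_x : ∀ t j, x (t + 1) j = (1 - lam j - ξ j) * x0 j
        + lam j * (∑ k, Wt j k * x t k) + ξ j * (∑ k, W j k * a t k))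
    (hbound : ∀ t j, x t j ≤ xbar j) :
    Tendsto a atTop (nhds 0) ∧ Tendsto d atTop (nhds Psistar) ∧
      Tendsto x atTop (nhds xstar) :=
  adoption_free_equilibrium_GAS_general n β γ θ δ hβ hγ hθ hδ hγpos hθpos W Wt hW0 hW1 hWt0 hWt1
    hWtirr lam ξ hlam hξ hlamξ hstub x0 hx0 xstar hxstar Psistar hPsistar xbar hxbar Psibar hPsibar
    Mbar hMbar heig a d x ha0 hd0 had0 hx00 hrec_a hrec_d hrec_x hbound
end

section
/- Perturbed linear convergence lemma: let M ∈ ℝ^{n×n} be a matrix such that every complex eigenvalue of M has modulus strictly less than 1, let c ∈ ℝ^n, and let e : ℕ → ℝ^n with e(t) → 0 as t → ∞. If x : ℕ → ℝ^n satisfies x(t+1) = c + M x(t) + e(t) for all t ∈ ℕ, then I − M is invertible and x(t) → (I − M)^{−1} c as t → ∞. -/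
/-!
Every complex eigenvalue of `M` lies in the open unit disc, so by Gelfand's formula the spectral
radius of (the complexification of) `M` is `< 1` and `∑ ‖M ^ k‖` converges. The Neumann series
`∑ M ^ k` then inverts `1 - M`. With `z = (1 - M)⁻¹ c`, the deviation `y = x - z` satisfies
`y (t + 1) = M y t + e t`, hence `y t = M ^ t y 0 + ∑_{k < t} M ^ k e (t - 1 - k)`: a
convolution of the summable sequence `‖M ^ k‖` with a null sequence, which tends to `0` by
Tannery's theorem.
-/

open Matrix Filter Topology Finset

attribute [local instance] Matrix.linftyOpSeminormedAddCommGroup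
  Matrix.linftyOpNormedAddCommGroup Matrix.linftyOpNormedRing Matrix.linftyOpNormedAlgebra

theorem tendsto_sum_range_mul_sub_of_summable {a u : ℕ → ℝ} (ha : Summable a)
    (hu : Tendsto u atTop (𝓝 0)) :
    Tendsto (fun t => ∑ k ∈ range t, a k * u (t - 1 - k)) atTop (𝓝 0) := by
  obtain ⟨B, hB⟩ := hu.abs.bddAbove_range
  replace hB : ∀ t, |u t| ≤ B := fun t => hB (Set.mem_range_self t)
  let f : ℕ → ℕ → ℝ := fun t k => if k < t then a k * u (t - 1 - k) else 0
  have hf : ∀ t, ∑' k, f t k = ∑ k ∈ range t, a k * u (t - 1 - k) := fun t => by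
    rw [tsum_eq_sum (s := range t) fun k hk => if_neg (by simpa using hk)]
    exact sum_congr rfl fun k hk => if_pos (mem_range.mp hk)
  have hlim : ∀ k, Tendsto (f · k) atTop (𝓝 0) := fun k => by
    have := (hu.comp ((tendsto_sub_atTop_nat k).comp (tendsto_sub_atTop_nat 1))).const_mul (a k)
    refine (mul_zero (a k) ▸ this).congr' ?_
    filter_upwards [eventually_gt_atTop k] with t ht
    simp [f, ht]
  have hbound : ∀ t k, ‖f t k‖ ≤ |a k| * B := fun t k => by
    by_cases hk : k < t
    · simpa [f, hk, abs_mul] using mul_le_mul_of_nonneg_left (hB _) (abs_nonneg (a k))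
    · simpa [f, hk] using mul_nonneg (abs_nonneg (a k)) ((abs_nonneg _).trans (hB 0))
  simpa [hf] using tendsto_tsum_of_dominated_convergence (ha.abs.mul_right B) hlim
    (Eventually.of_forall hbound)

section Recurrence

variable {𝕜 E : Type*} [NontriviallyNormedField 𝕜] [NormedAddCommGroup E] [NormedSpace 𝕜 E]

theorem eq_pow_apply_add_sum_of_recurrence (L : E →L[𝕜] E) {y e : ℕ → E}
    (hy : ∀ t, y (t + 1) = L (y t) + e t) (t : ℕ) :
    y t = (L ^ t) (y 0) + ∑ k ∈ range t, (L ^ k) (e (t - 1 - k)) := by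
  induction t with
  | zero => simp
  | succ t ih =>
    rw [hy, ih, map_add, map_sum, sum_range_succ' _ t, pow_succ', add_assoc]
    simp [pow_succ', Nat.sub_sub, add_comm 1]

theorem tendsto_zero_of_recurrence (L : E →L[𝕜] E) (hL : Summable fun k => ‖L ^ k‖)
    {y e : ℕ → E} (he : Tendsto e atTop (𝓝 0)) (hy : ∀ t, y (t + 1) = L (y t) + e t) :
    Tendsto y atTop (𝓝 0) := by
  have hbound :
      ∀ t, ‖y t‖ ≤ ‖L ^ t‖ * ‖y 0‖ + ∑ k ∈ range t, ‖L ^ k‖ * ‖e (t - 1 - k)‖ :=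
    fun t => eq_pow_apply_add_sum_of_recurrence L hy t ▸ (norm_add_le _ _).trans
      (add_le_add ((L ^ t).le_opNorm _) ((norm_sum_le _ _).trans
        (sum_le_sum fun k _ => (L ^ k).le_opNorm _)))
  refine squeeze_zero_norm hbound ?_
  simpa using (hL.tendsto_atTop_zero.mul_const ‖y 0‖).add
    (tendsto_sum_range_mul_sub_of_summable hL (tendsto_zero_iff_norm_tendsto_zero.mp he))

theorem tendsto_of_affine_recurrence (L : E →L[𝕜] E) (hL : Summable fun k => ‖L ^ k‖)
    {c z : E} (hz : c + L z = z) {x e : ℕ → E} (he : Tendsto e atTop (𝓝 0))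
    (hx : ∀ t, x (t + 1) = c + L (x t) + e t) :
    Tendsto x atTop (𝓝 z) := by
  refine tendsto_sub_nhds_zero_iff.mp (tendsto_zero_of_recurrence L hL he fun t => ?_)
  rw [hx, map_sub]
  nth_rewrite 1 [← hz]
  abel

end Recurrence

theorem summable_norm_pow_of_spectralRadius_lt_one {A : Type*} [NormedRing A]
    [NormedAlgebra ℂ A] [CompleteSpace A] {a : A} (ha : spectralRadius ℂ a < 1) :
    Summable fun k => ‖a ^ k‖ := by
  obtain ⟨r, hρr, hr1⟩ := ENNReal.lt_iff_exists_nnreal_btwn.mp ha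
  have hpow : ∀ᶠ k : ℕ in atTop, ‖a ^ k‖ ≤ r ^ k := by
    have hgelfand := spectrum.pow_nnnorm_pow_one_div_tendsto_nhds_spectralRadius a
    filter_upwards [hgelfand.eventually_lt_const hρr, eventually_ge_atTop 1] with k hk hk1
    have := ENNReal.rpow_le_rpow hk.le (by positivity : (0 : ℝ) ≤ k)
    rw [← ENNReal.rpow_mul, one_div, inv_mul_cancel₀ (by positivity), ENNReal.rpow_one,
      ENNReal.rpow_natCast] at this
    exact_mod_cast this
  exact (summable_geometric_of_lt_one r.coe_nonneg (by exact_mod_cast hr1))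
    |>.of_norm_bounded_eventually_nat (by simpa using hpow)

theorem isUnit_one_sub_of_summable_pow {R : Type*} [Ring R] [TopologicalSpace R]
    [IsTopologicalRing R] [T2Space R] {x : R} (h : Summable (x ^ ·)) : IsUnit (1 - x) :=
  ⟨⟨1 - x, ∑' k, x ^ k, h.one_sub_mul_tsum_pow, h.tsum_pow_mul_one_sub⟩, rfl⟩

namespace Matrix

theorem linfty_opNorm_map_eq {m n α β : Type*} [Fintype m] [Fintype n]
    [SeminormedAddCommGroup α] [SeminormedAddCommGroup β] (A : Matrix m n α) (f : α → β)
    (hf : ∀ a, ‖f a‖ = ‖a‖) : ‖A.map f‖ = ‖A‖ := by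
  have hf' : ∀ a, ‖f a‖₊ = ‖a‖₊ := fun a => NNReal.eq (hf a)
  simp [linfty_opNorm_def, hf']

variable {n : Type*} [Fintype n] [DecidableEq n]

theorem mk_mulVecLin_pow {𝕜 : Type*} [NontriviallyNormedField 𝕜] (A : Matrix n n 𝕜)
    (k : ℕ) :
    ContinuousLinearMap.mk (mulVecLin A) ^ k = ContinuousLinearMap.mk (mulVecLin (A ^ k)) := by
  induction k with
  | zero => ext; simp
  | succ k ih =>
    ext v : 1
    rw [pow_succ, ih, pow_succ]
    exact mulVec_mulVec v (A ^ k) A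

theorem summable_norm_pow_mk_mulVecLin {𝕜 : Type*} [NontriviallyNormedField 𝕜]
    [NormedAlgebra ℝ 𝕜] {A : Matrix n n 𝕜} (h : Summable fun k => ‖A ^ k‖) :
    Summable fun k => ‖ContinuousLinearMap.mk (mulVecLin A) ^ k‖ := by
  simpa [mk_mulVecLin_pow, ← linfty_opNorm_eq_opNorm] using h

theorem spectralRadius_lt_one_of_charpoly_roots_lt_one (A : Matrix n n ℂ)
    (h : ∀ μ : ℂ, A.charpoly.IsRoot μ → ‖μ‖ < 1) : spectralRadius ℂ A < 1 := by
  rcases (spectrum ℂ A).eq_empty_or_nonempty with hσ | hσ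
  · simp [spectralRadius, hσ]
  · refine mod_cast spectrum.spectralRadius_lt_of_forall_lt_of_nonempty hσ fun μ hμ => ?_
    exact_mod_cast h μ (mem_spectrum_iff_isRoot_charpoly.mp hμ)

theorem summable_norm_pow_of_charpoly_roots_lt_one (M : Matrix n n ℝ)
    (h : ∀ μ : ℂ, (M.map (fun r : ℝ => (r : ℂ))).charpoly.IsRoot μ → ‖μ‖ < 1) :
    Summable fun k => ‖M ^ k‖ := by
  have hρ := spectralRadius_lt_one_of_charpoly_roots_lt_one _ h
  refine (summable_norm_pow_of_spectralRadius_lt_one hρ).congr fun k => ?_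
  have : M.map Complex.ofRealHom ^ k = (M ^ k).map Complex.ofRealHom := by
    rw [← RingHom.mapMatrix_apply, ← RingHom.mapMatrix_apply, map_pow]
  exact (congrArg norm this).trans (linfty_opNorm_map_eq _ _ Complex.norm_real)

end Matrix

theorem perturbed_linear_convergence_general
    (n : ℕ)
    (M : Matrix (Fin n) (Fin n) ℝ)
    (heig : ∀ μ : ℂ, (M.map (fun r : ℝ => (r : ℂ))).charpoly.IsRoot μ →
        ‖μ‖ < 1)
    (c : Fin n → ℝ)
    (e : ℕ → Fin n → ℝ) (he : Tendsto e atTop (nhds 0))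
    (x : ℕ → Fin n → ℝ)
    (hx : ∀ t, x (t + 1) = c + M *ᵥ x t + e t) :
    IsUnit (1 - M) ∧ Tendsto x atTop (nhds ((1 - M)⁻¹ *ᵥ c)) := by
  have hsum := M.summable_norm_pow_of_charpoly_roots_lt_one heig
  have hunit : IsUnit (1 - M) := isUnit_one_sub_of_summable_pow hsum.of_norm
  have hfix : (1 - M) *ᵥ ((1 - M)⁻¹ *ᵥ c) = c := by
    rw [mulVec_mulVec, mul_nonsing_inv _ ((isUnit_iff_isUnit_det _).mp hunit), one_mulVec]
  rw [sub_mulVec, one_mulVec] at hfix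
  exact ⟨hunit, tendsto_of_affine_recurrence (.mk (mulVecLin M))
    (summable_norm_pow_mk_mulVecLin hsum) (eq_sub_iff_add_eq.mp hfix.symm) he hx⟩

/-- Perturbed linear convergence lemma: if every complex eigenvalue of `M`
has modulus `< 1`, `e(t) → 0`, and `x(t+1) = c + M x(t) + e(t)`, then `I - M` is
invertible and `x(t) → (I - M)⁻¹ c`. -/
theorem perturbed_linear_convergence
    (n : ℕ) (hn : 1 ≤ n)
    (M : Matrix (Fin n) (Fin n) ℝ)
    (heig : ∀ μ : ℂ, (M.map (fun r : ℝ => (r : ℂ))).charpoly.IsRoot μ →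
        ‖μ‖ < 1)
    (c : Fin n → ℝ)
    (e : ℕ → Fin n → ℝ) (he : Tendsto e atTop (nhds 0))
    (x : ℕ → Fin n → ℝ)
    (hx : ∀ t, x (t + 1) = c + M *ᵥ x t + e t) :
    IsUnit (1 - M) ∧ Tendsto x atTop (nhds ((1 - M)⁻¹ *ᵥ c)) :=
  perturbed_linear_convergence_general n M heig c e he x hx
end

section
/- Monotonicity of the opinion-dependent reproduction number: assume γ_j > 0 and θ_j > 0 for all j, and let x, y ∈ [0,1]^n with x_j ≤ y_j for all j. Define M(z) := I − Δ + B·diag(z)·(I − diag(Ψ(z)))·W for z ∈ [0,1]^n, where Ψ(z)_j := θ_j (1 − z_j) / (γ_j z_j + θ_j (1 − z_j)). Then M(x) and M(y) are nonnegative matrices with M(x) ≤ M(y) entrywise, and the spectral radius (the maximum of the moduli of the complex eigenvalues) satisfies ρ(M(x)) ≤ ρ(M(y)). -/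
open Matrix

/-- The spectral radius of a real matrix: the supremum of the moduli of its complex
eigenvalues (the roots of its characteristic polynomial over `ℂ`). -/
noncomputable def specRad {n : ℕ} (M : Matrix (Fin n) (Fin n) ℝ) : ℝ :=
  sSup {r : ℝ | ∃ μ : ℂ,
    (M.map (fun x : ℝ => (x : ℂ))).charpoly.IsRoot μ ∧ r = ‖μ‖}

/-!
Entrywise, `M z = I - Δ + diag (β_j g_j (z_j)) W` with
`g (z) = z (1 - Ψ (z)) = γ z² / (γ z + θ (1 - z))`, which is nonnegative and nondecreasing on
`[0, 1]`; this gives the three entrywise claims. If `0 ≤ A ≤ B` entrywise then `0 ≤ A ^ k ≤ B ^ k`,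
so `‖A ^ k‖ ≤ ‖B ^ k‖` for the row-sum operator norm, and Gelfand's formula
`ρ(A) = lim ‖A ^ k‖ ^ (1 / k)` gives `ρ(A) ≤ ρ(B)`.
-/

theorem spectralRadius_le_of_forall_nnnorm_pow_le {A : Type*} [NormedRing A]
    [NormedAlgebra ℂ A] [CompleteSpace A] {a b : A} (h : ∀ k : ℕ, ‖a ^ k‖₊ ≤ ‖b ^ k‖₊) :
    spectralRadius ℂ a ≤ spectralRadius ℂ b :=
  le_of_tendsto_of_tendsto' (spectrum.pow_nnnorm_pow_one_div_tendsto_nhds_spectralRadius a)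
    (spectrum.pow_nnnorm_pow_one_div_tendsto_nhds_spectralRadius b) fun k =>
      ENNReal.rpow_le_rpow (ENNReal.coe_le_coe.2 (h k)) (by positivity)

namespace Matrix

variable {ι : Type*} [Fintype ι]

open scoped Matrix.Norms.Operator in
theorem linfty_opNNNorm_le_of_nnnorm_apply_le {α : Type*} [SeminormedAddCommGroup α]
    {A B : Matrix ι ι α} (h : ∀ i j, ‖A i j‖₊ ≤ ‖B i j‖₊) : ‖A‖₊ ≤ ‖B‖₊ := by
  simp only [linfty_opNNNorm_def]
  exact Finset.sup_mono_fun fun i _ => Finset.sum_le_sum fun j _ => h i j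

variable [DecidableEq ι]

theorem pow_apply_le_pow_apply {R : Type*} [Semiring R] [PartialOrder R] [IsOrderedRing R]
    {A B : Matrix ι ι R} (hA : ∀ i j, 0 ≤ A i j) (hAB : ∀ i j, A i j ≤ B i j) (k : ℕ)
    (i j : ι) : (A ^ k) i j ≤ (B ^ k) i j := by
  have hB i j : 0 ≤ B i j := (hA i j).trans (hAB i j)
  induction k generalizing j with
  | zero => rfl
  | succ k ih =>
    rw [pow_succ, pow_succ, mul_apply, mul_apply]
    exact Finset.sum_le_sum fun l _ =>
      mul_le_mul (ih l) (hAB l j) (hA l j) (pow_apply_nonneg hB k i l)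

open scoped Matrix.Norms.Operator in
theorem spectralRadius_map_ofReal_le {A B : Matrix ι ι ℝ} (hA : ∀ i j, 0 ≤ A i j)
    (hAB : ∀ i j, A i j ≤ B i j) :
    spectralRadius ℂ (A.map ((↑) : ℝ → ℂ)) ≤ spectralRadius ℂ (B.map ((↑) : ℝ → ℂ)) := by
  have map_ofReal_pow (C : Matrix ι ι ℝ) (k : ℕ) :
      C.map ((↑) : ℝ → ℂ) ^ k = (C ^ k).map (↑) :=
    (map_pow Complex.ofRealHom.mapMatrix C k).symm
  refine spectralRadius_le_of_forall_nnnorm_pow_le fun k => ?_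
  rw [map_ofReal_pow, map_ofReal_pow]
  refine linfty_opNNNorm_le_of_nnnorm_apply_le fun i j => ?_
  have h0 := pow_apply_nonneg hA k i j
  have h1 := pow_apply_le_pow_apply hA hAB k i j
  rw [← NNReal.coe_le_coe]
  simp [abs_of_nonneg h0, abs_of_nonneg (h0.trans h1), h1]

theorem spectralRadius_ne_top (A : Matrix ι ι ℂ) : spectralRadius ℂ A ≠ ⊤ := by
  have := A.finite_spectrum.to_subtype
  rw [spectralRadius, iSup_subtype']
  exact (ENNReal.iSup_coe_lt_top.2 (Set.finite_range _).bddAbove).ne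

end Matrix

theorem specRad_eq_toReal_spectralRadius {n : ℕ} (M : Matrix (Fin n) (Fin n) ℝ) :
    specRad M = (spectralRadius ℂ (M.map ((↑) : ℝ → ℂ))).toReal := by
  have hroots : {r : ℝ | ∃ μ : ℂ, (M.map (fun x : ℝ => (x : ℂ))).charpoly.IsRoot μ ∧ r = ‖μ‖}
      = (‖·‖) '' spectrum ℂ (M.map ((↑) : ℝ → ℂ)) := by
    ext r
    simp [mem_spectrum_iff_isRoot_charpoly, eq_comm]
  rw [specRad, hroots, sSup_image', spectralRadius, iSup_subtype',
    ENNReal.toReal_iSup fun _ => ENNReal.coe_ne_top]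
  rfl

theorem specRad_le_specRad {n : ℕ} {A B : Matrix (Fin n) (Fin n) ℝ} (hA : ∀ i j, 0 ≤ A i j)
    (hAB : ∀ i j, A i j ≤ B i j) : specRad A ≤ specRad B := by
  rw [specRad_eq_toReal_spectralRadius, specRad_eq_toReal_spectralRadius]
  exact ENNReal.toReal_mono (spectralRadius_ne_top _) (spectralRadius_map_ofReal_le hA hAB)

theorem mul_one_sub_div_eq {K : Type*} [Field K] {γ θ z : K} (h : γ * z + θ * (1 - z) ≠ 0) :
    z * (1 - θ * (1 - z) / (γ * z + θ * (1 - z))) = γ * z ^ 2 / (γ * z + θ * (1 - z)) := by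
  rw [one_sub_div h, mul_div_assoc']
  congr 1
  ring

section

variable {γ θ : ℝ} (hγ : 0 < γ) (hθ : 0 < θ)
include hγ hθ

theorem mul_add_mul_one_sub_pos {z : ℝ} (hz : z ∈ Set.Icc (0 : ℝ) 1) :
    0 < γ * z + θ * (1 - z) := by
  nlinarith [mul_nonneg hγ.le hz.1, mul_nonneg hθ.le (sub_nonneg.2 hz.2), mul_pos hγ hθ]

theorem mul_one_sub_div_nonneg {z : ℝ} (hz : z ∈ Set.Icc (0 : ℝ) 1) :
    0 ≤ z * (1 - θ * (1 - z) / (γ * z + θ * (1 - z))) := by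
  have hD := mul_add_mul_one_sub_pos hγ hθ hz
  rw [mul_one_sub_div_eq hD.ne']
  positivity

theorem monotoneOn_mul_one_sub_div :
    MonotoneOn (fun z : ℝ => z * (1 - θ * (1 - z) / (γ * z + θ * (1 - z)))) (Set.Icc 0 1) := by
  intro x hx y hy hxy
  have hDx := mul_add_mul_one_sub_pos hγ hθ hx
  have hDy := mul_add_mul_one_sub_pos hγ hθ hy
  dsimp only
  rw [mul_one_sub_div_eq hDx.ne', mul_one_sub_div_eq hDy.ne', div_le_div_iff₀ hDx hDy]
  -- the difference of the two sides is `γ (y - x) (γ x y + θ (x + y (1 - x)))`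
  nlinarith [mul_nonneg (sub_nonneg.2 hxy) (mul_nonneg (mul_nonneg hγ.le hx.1) hy.1),
    mul_nonneg (sub_nonneg.2 hxy) (mul_nonneg hθ.le hx.1),
    mul_nonneg (sub_nonneg.2 hxy) (mul_nonneg hθ.le (mul_nonneg hy.1 (sub_nonneg.2 hx.2)))]

end

namespace Matrix

variable {ι R : Type*} [Fintype ι] [DecidableEq ι] [CommRing R]

theorem diagonal_mul_diagonal_mul_one_sub_diagonal (b z p : ι → R) :
    diagonal b * diagonal z * (1 - diagonal p) = diagonal fun j => b j * (z j * (1 - p j)) := by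
  rw [← diagonal_one, diagonal_sub, diagonal_mul_diagonal, diagonal_mul_diagonal]
  simp only [mul_assoc]

variable [PartialOrder R] [IsOrderedRing R] {d v v' : ι → R} {W : Matrix ι ι R}

theorem one_sub_diagonal_add_diagonal_mul_apply_nonneg (hd : ∀ i, d i ≤ 1) (hv : ∀ i, 0 ≤ v i)
    (hW : ∀ i j, 0 ≤ W i j) (i j : ι) : 0 ≤ (1 - diagonal d + diagonal v * W) i j := by
  rw [add_apply, sub_apply, one_apply, diagonal_apply, diagonal_mul]
  refine add_nonneg ?_ (mul_nonneg (hv i) (hW i j))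
  split_ifs <;> simp [hd]

theorem one_sub_diagonal_add_diagonal_mul_apply_mono (hvv' : ∀ i, v i ≤ v' i)
    (hW : ∀ i j, 0 ≤ W i j) (i j : ι) :
    (1 - diagonal d + diagonal v * W) i j ≤ (1 - diagonal d + diagonal v' * W) i j := by
  simp only [add_apply, diagonal_mul]
  gcongr
  exacts [hW i j, hvv' i]

end Matrix

theorem reproduction_number_monotone_general
    (n : ℕ)
    (β δ : Fin n → ℝ)
    (hβ : ∀ j, β j ∈ Set.Icc (0 : ℝ) 1) (hδ : ∀ j, δ j ∈ Set.Icc (0 : ℝ) 1)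
    (γ θ : Fin n → ℝ) (hγpos : ∀ j, 0 < γ j) (hθpos : ∀ j, 0 < θ j)
    (W : Matrix (Fin n) (Fin n) ℝ)
    (hW0 : ∀ j k, 0 ≤ W j k)
    (x y : Fin n → ℝ)
    (hx : ∀ j, x j ∈ Set.Icc (0 : ℝ) 1) (hy : ∀ j, y j ∈ Set.Icc (0 : ℝ) 1)
    (hxy : ∀ j, x j ≤ y j)
    (M : (Fin n → ℝ) → Matrix (Fin n) (Fin n) ℝ)
    (hM : ∀ z : Fin n → ℝ, M z = 1 - Matrix.diagonal δ
        + Matrix.diagonal β * Matrix.diagonal z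
          * (1 - Matrix.diagonal (fun j =>
              θ j * (1 - z j) / (γ j * z j + θ j * (1 - z j)))) * W) :
    (∀ i j, 0 ≤ M x i j) ∧ (∀ i j, 0 ≤ M y i j) ∧
    (∀ i j, M x i j ≤ M y i j) ∧ specRad (M x) ≤ specRad (M y) := by
  set v : (Fin n → ℝ) → Fin n → ℝ := fun z j =>
    β j * (z j * (1 - θ j * (1 - z j) / (γ j * z j + θ j * (1 - z j))))
  have hMv z : M z = 1 - diagonal δ + diagonal (v z) * W := by
    rw [hM, diagonal_mul_diagonal_mul_one_sub_diagonal]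
  have hM_nonneg z (hz : ∀ j, z j ∈ Set.Icc (0 : ℝ) 1) : ∀ i j, 0 ≤ M z i j := by
    rw [hMv]
    exact one_sub_diagonal_add_diagonal_mul_apply_nonneg (hδ · |>.2)
      (fun j => mul_nonneg (hβ j).1 (mul_one_sub_div_nonneg (hγpos j) (hθpos j) (hz j))) hW0
  have hv_mono j : v x j ≤ v y j :=
    mul_le_mul_of_nonneg_left
      (monotoneOn_mul_one_sub_div (hγpos j) (hθpos j) (hx j) (hy j) (hxy j)) (hβ j).1
  have hMxy : ∀ i j, M x i j ≤ M y i j := by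
    rw [hMv, hMv]
    exact one_sub_diagonal_add_diagonal_mul_apply_mono hv_mono hW0
  exact ⟨hM_nonneg x hx, hM_nonneg y hy, hMxy, specRad_le_specRad (hM_nonneg x hx) hMxy⟩

/-- Monotonicity of the opinion-dependent reproduction number. -/
theorem reproduction_number_monotone
    (n : ℕ) (hn : 1 ≤ n)
    (β δ : Fin n → ℝ)
    (hβ : ∀ j, β j ∈ Set.Icc (0 : ℝ) 1) (hδ : ∀ j, δ j ∈ Set.Icc (0 : ℝ) 1)
    (γ θ : Fin n → ℝ) (hγpos : ∀ j, 0 < γ j) (hθpos : ∀ j, 0 < θ j)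
    (W : Matrix (Fin n) (Fin n) ℝ)
    (hW0 : ∀ j k, 0 ≤ W j k) (hW1 : ∀ j, ∑ k, W j k = 1)
    (x y : Fin n → ℝ)
    (hx : ∀ j, x j ∈ Set.Icc (0 : ℝ) 1) (hy : ∀ j, y j ∈ Set.Icc (0 : ℝ) 1)
    (hxy : ∀ j, x j ≤ y j)
    (M : (Fin n → ℝ) → Matrix (Fin n) (Fin n) ℝ)
    (hM : ∀ z : Fin n → ℝ, M z = 1 - Matrix.diagonal δ
        + Matrix.diagonal β * Matrix.diagonal z
          * (1 - Matrix.diagonal (fun j =>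
              θ j * (1 - z j) / (γ j * z j + θ j * (1 - z j)))) * W) :
    (∀ i j, 0 ≤ M x i j) ∧ (∀ i j, 0 ≤ M y i j) ∧
    (∀ i j, M x i j ≤ M y i j) ∧ specRad (M x) ≤ specRad (M y) :=
  reproduction_number_monotone_general n β δ hβ hδ γ θ hγpos hθpos W hW0 x y hx hy hxy M hM
end
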